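/- arXiv:2201.07222 — 6 statements merged into one kernel-verified Lean document; each statement's English description precedes it below -/
import Mathlib

section
/- Let f ∈ L¹(I) with I = [t,T] and let (φ_ν)_ν be a sequence of bijective, absolutely continuous maps φ_ν : I → I with φ_ν' > 0 a.e., each with Lipschitz inverse ψ_ν whose Lipschitz constants are uniformly bounded, and φ_ν → id uniformly on I. Then f ∘ φ_ν → f in L¹(I). -/
open MeasureTheory Set Filter Topology
open scoped ENNReal NNReal

-- Key measure lemma: pushforward of restricted volume by φ is ≤ C • restricted volume.
lemma map_le_smul (t T : ℝ) (φ ψ : ℝ → ℝ) (C : NNReal)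
    (hbij : BijOn φ (Icc t T) (Icc t T))
    (hLip : LipschitzOnWith C ψ (Icc t T))
    (hinv : InvOn ψ φ (Icc t T) (Icc t T))
    (hφm : AEMeasurable φ (volume.restrict (Icc t T))) :
    Measure.map φ (volume.restrict (Icc t T)) ≤ (C : ℝ≥0∞) • volume.restrict (Icc t T) := by
  set I := Icc t T
  have hIm : MeasurableSet I := measurableSet_Icc
  rw [Measure.le_iff]
  intro s hs
  rw [Measure.map_apply_of_aemeasurable hφm hs, Measure.smul_apply,
    Measure.restrict_apply' hIm, Measure.restrict_apply' hIm]
  have hset : φ ⁻¹' s ∩ I = ψ '' (s ∩ I) := by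
    ext x
    constructor
    · rintro ⟨hxs, hxI⟩
      exact ⟨φ x, ⟨hxs, hbij.mapsTo hxI⟩, hinv.1 hxI⟩
    · rintro ⟨y, ⟨hys, hyI⟩, rfl⟩
      obtain ⟨z, hzI, rfl⟩ := hbij.surjOn hyI
      rw [hinv.1 hzI]
      exact ⟨hys, hzI⟩
  rw [hset, ← MeasureTheory.hausdorffMeasure_real]
  calc μH[1] (ψ '' (s ∩ I)) ≤ (C : ℝ≥0∞) ^ (1 : ℝ) * μH[1] (s ∩ I) :=
        (hLip.mono inter_subset_right).hausdorffMeasure_image_le zero_le_one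
    _ = (C : ℝ≥0∞) * μH[1] (s ∩ I) := by rw [ENNReal.rpow_one]
    _ = C • μH[1] (s ∩ I) := rfl

lemma key_bound (t T : ℝ) (φ : ℝ → ℝ) (C : NNReal)
    (hmap : Measure.map φ (volume.restrict (Icc t T)) ≤ (C : ℝ≥0∞) • volume.restrict (Icc t T))
    (hφm : AEMeasurable φ (volume.restrict (Icc t T)))
    {h : ℝ → ℝ} (hh : IntegrableOn h (Icc t T)) :
    IntegrableOn (fun s => h (φ s)) (Icc t T) ∧
      ∫ s in Icc t T, |h (φ s)| ≤ (C : ℝ) * ∫ s in Icc t T, |h s| := by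
  set μ := volume.restrict (Icc t T) with hμ
  have h2 : (C : ℝ≥0∞) • μ ≪ μ := by
    refine Measure.AbsolutelyContinuous.mk fun s hs h0 => ?_
    simp [h0]
  have hac : Measure.map φ μ ≪ μ := (Measure.absolutelyContinuous_of_le hmap).trans h2
  have hhm : AEMeasurable h μ := hh.aemeasurable
  have hcomp_m : AEMeasurable (fun s => h (φ s)) μ :=
    ((hhm.mono_ac hac).comp_aemeasurable hφm)
  have hFm : AEMeasurable (fun x => ENNReal.ofReal |h x|) (Measure.map φ μ) :=
    (ENNReal.measurable_ofReal.comp measurable_abs).comp_aemeasurable (hhm.mono_ac hac)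
  have hlin : ∫⁻ s, ENNReal.ofReal |h (φ s)| ∂μ ≤ C * ∫⁻ s, ENNReal.ofReal |h s| ∂μ := by
    calc ∫⁻ s, ENNReal.ofReal |h (φ s)| ∂μ
        = ∫⁻ y, ENNReal.ofReal |h y| ∂(Measure.map φ μ) := (lintegral_map' hFm hφm).symm
      _ ≤ ∫⁻ y, ENNReal.ofReal |h y| ∂((C : ℝ≥0∞) • μ) := lintegral_mono' hmap le_rfl
      _ = C * ∫⁻ y, ENNReal.ofReal |h y| ∂μ := lintegral_smul_measure _ _
  have hfin : ∫⁻ s, ENNReal.ofReal |h s| ∂μ < ⊤ := by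
    have := hh.hasFiniteIntegral
    rw [hasFiniteIntegral_iff_norm] at this
    simpa [Real.norm_eq_abs] using this
  have hfinC : (C : ℝ≥0∞) * ∫⁻ s, ENNReal.ofReal |h s| ∂μ < ⊤ :=
    ENNReal.mul_lt_top ENNReal.coe_lt_top hfin
  have hint : IntegrableOn (fun s => h (φ s)) (Icc t T) := by
    refine ⟨hcomp_m.aestronglyMeasurable, ?_⟩
    rw [hasFiniteIntegral_iff_norm]
    simp_rw [Real.norm_eq_abs]
    exact lt_of_le_of_lt hlin hfinC
  refine ⟨hint, ?_⟩
  rw [integral_eq_lintegral_of_nonneg_ae (Eventually.of_forall fun s => abs_nonneg _)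
      (measurable_abs.comp_aemeasurable hcomp_m).aestronglyMeasurable,
    integral_eq_lintegral_of_nonneg_ae (Eventually.of_forall fun s => abs_nonneg _)
      (measurable_abs.comp_aemeasurable hhm).aestronglyMeasurable]
  calc (∫⁻ s, ENNReal.ofReal |h (φ s)| ∂μ).toReal
      ≤ ((C : ℝ≥0∞) * ∫⁻ s, ENNReal.ofReal |h s| ∂μ).toReal :=
        ENNReal.toReal_mono hfinC.ne hlin
    _ = (C : ℝ) * (∫⁻ s, ENNReal.ofReal |h s| ∂μ).toReal := by
        rw [ENNReal.toReal_mul, ENNReal.coe_toReal]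


/-- If `f ∈ L¹([t,T])` and `(φ_ν)` is a sequence of bijective absolutely continuous
maps of `[t,T]` onto itself with a.e. positive derivative, Lipschitz inverses `ψ_ν`
with uniformly bounded Lipschitz constants, and `φ_ν → id` uniformly, then
`f ∘ φ_ν → f` in `L¹([t,T])`. -/
theorem stmt1 (t T : ℝ) (ht : t < T) (f : ℝ → ℝ)
    (hf : IntegrableOn f (Icc t T))
    (φ ψ : ℕ → ℝ → ℝ) (g : ℕ → ℝ → ℝ)
    (hbij : ∀ ν, BijOn (φ ν) (Icc t T) (Icc t T))
    (hAC : ∀ ν, ∀ x ∈ Icc t T, φ ν x = t + ∫ u in t..x, g ν u)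
    (hgint : ∀ ν, IntegrableOn (g ν) (Icc t T))
    (hgpos : ∀ ν, ∀ᵐ u ∂(volume.restrict (Icc t T)), 0 < g ν u)
    (L : ℕ → NNReal) (C : NNReal) (hC : ∀ ν, L ν ≤ C)
    (hLip : ∀ ν, LipschitzOnWith (L ν) (ψ ν) (Icc t T))
    (hinv : ∀ ν, InvOn (ψ ν) (φ ν) (Icc t T) (Icc t T))
    (hunif : TendstoUniformlyOn (fun ν s => φ ν s) id atTop (Icc t T)) :
    Tendsto (fun ν => ∫ s in Icc t T, |f (φ ν s) - f s|) atTop (nhds 0) := by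
  have hIm : MeasurableSet (Icc t T) := measurableSet_Icc
  -- a.e. measurability of each φ ν on the interval
  have hφm : ∀ ν, AEMeasurable (φ ν) (volume.restrict (Icc t T)) := by
    intro ν
    have hcont : ContinuousOn (fun x => t + ∫ u in t..x, g ν u) (Icc t T) := by
      have h2 : ContinuousOn (fun x => ∫ u in t..x, g ν u) (uIcc t T) :=
        intervalIntegral.continuousOn_primitive_interval (by rw [uIcc_of_le ht.le]; exact hgint ν)
      rw [uIcc_of_le ht.le] at h2
      exact continuousOn_const.add h2
    have heq : φ ν =ᵐ[volume.restrict (Icc t T)] fun x => t + ∫ u in t..x, g ν u := by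
      filter_upwards [ae_restrict_mem hIm] with x hx
      exact hAC ν x hx
    exact (hcont.aemeasurable hIm).congr heq.symm
  have hLipC : ∀ ν, LipschitzOnWith C (ψ ν) (Icc t T) := fun ν x hx y hy =>
    le_trans (hLip ν hx hy) (mul_le_mul_left (ENNReal.coe_le_coe.mpr (hC ν)) _)
  have hmap : ∀ ν, Measure.map (φ ν) (volume.restrict (Icc t T)) ≤
      (C : ℝ≥0∞) • volume.restrict (Icc t T) := fun ν =>
    map_le_smul t T (φ ν) (ψ ν) C (hbij ν) (hLipC ν) (hinv ν) (hφm ν)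
  rw [NormedAddCommGroup.tendsto_nhds_zero]
  intro ε hε
  have hC0 : (0:ℝ) ≤ (C:ℝ) := C.coe_nonneg
  set δ : ℝ := ε / (3 * ((C:ℝ) + 1)) with hδdef
  have hδ : 0 < δ := by positivity
  -- approximate f by a continuous compactly supported function
  have hF : Integrable ((Icc t T).indicator f) volume :=
    (integrable_indicator_iff hIm).mpr hf
  obtain ⟨q, hq_supp, hq_close, hq_cont, hq_int⟩ :=
    hF.exists_hasCompactSupport_integral_sub_le hδ
  -- distance between f and q on the interval
  have hq_intI : IntegrableOn q (Icc t T) := hq_int.integrableOn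
  have hfq_int : IntegrableOn (fun s => |f s - q s|) (Icc t T) := (hf.sub hq_intI).abs
  have hD : ∫ s in Icc t T, |f s - q s| ≤ δ := by
    have h1 : ∫ s in Icc t T, |f s - q s| =
        ∫ s in Icc t T, ‖(Icc t T).indicator f s - q s‖ := by
      refine setIntegral_congr_fun hIm fun x hx => ?_
      rw [indicator_of_mem hx, Real.norm_eq_abs]
    rw [h1]
    refine le_trans (setIntegral_le_integral ((hF.sub hq_int).norm)
      (Eventually.of_forall fun x => norm_nonneg _)) hq_close
  -- uniform continuity of q
  have hq_uc : UniformContinuous q :=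
    hq_supp.uniformContinuous_of_continuous hq_cont
  set ε₃ : ℝ := ε / (3 * ((T - t) + 1)) with hε₃def
  have hTt : (0:ℝ) < T - t := sub_pos.mpr ht
  have hε₃ : 0 < ε₃ := by positivity
  obtain ⟨δ₂, hδ₂, hδ₂imp⟩ := Metric.uniformContinuous_iff.mp hq_uc ε₃ hε₃
  have hev := Metric.tendstoUniformlyOn_iff.mp hunif δ₂ hδ₂
  filter_upwards [hev] with ν hν
  -- integrabilities
  obtain ⟨hfφ_int, hfq_bound⟩ := key_bound t T (φ ν) C (hmap ν) (hφm ν) (hf.sub hq_intI)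
  simp only [Pi.sub_apply] at hfq_bound
  obtain ⟨hqφ_int, -⟩ := key_bound t T (φ ν) C (hmap ν) (hφm ν) hq_intI
  obtain ⟨hfφ_int', -⟩ := key_bound t T (φ ν) C (hmap ν) (hφm ν) hf
  have hint1 : IntegrableOn (fun s => |f (φ ν s) - q (φ ν s)|) (Icc t T) := by
    have : (fun s => f (φ ν s) - q (φ ν s)) = fun s => (fun x => f x - q x) (φ ν s) := rfl
    exact ((hfφ_int'.sub hqφ_int)).abs
  have hint2 : IntegrableOn (fun s => |q (φ ν s) - q s|) (Icc t T) :=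
    (hqφ_int.sub hq_intI).abs
  have hintL : IntegrableOn (fun s => |f (φ ν s) - f s|) (Icc t T) :=
    (hfφ_int'.sub hf).abs
  -- pointwise triangle inequality
  have hint3 : IntegrableOn (fun s => |q s - f s|) (Icc t T) := (hq_intI.sub hf).abs
  have hint12 : IntegrableOn (fun s => |f (φ ν s) - q (φ ν s)| + |q (φ ν s) - q s|) (Icc t T) :=
    hint1.add hint2
  have htri : ∀ s, |f (φ ν s) - f s| ≤
      |f (φ ν s) - q (φ ν s)| + |q (φ ν s) - q s| + |q s - f s| := fun s => by
    calc |f (φ ν s) - f s| ≤ |f (φ ν s) - q s| + |q s - f s| := abs_sub_le _ _ _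
      _ ≤ (|f (φ ν s) - q (φ ν s)| + |q (φ ν s) - q s|) + |q s - f s| := by
          gcongr; exact abs_sub_le _ _ _
  have hsplit : ∫ s in Icc t T, |f (φ ν s) - f s| ≤
      (∫ s in Icc t T, |f (φ ν s) - q (φ ν s)|) + (∫ s in Icc t T, |q (φ ν s) - q s|)
        + ∫ s in Icc t T, |q s - f s| := by
    calc ∫ s in Icc t T, |f (φ ν s) - f s|
        ≤ ∫ s in Icc t T, (|f (φ ν s) - q (φ ν s)| + |q (φ ν s) - q s| + |q s - f s|) :=
          integral_mono hintL (hint12.add hint3) htri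
      _ = _ := by
          rw [integral_add hint12 hint3, integral_add hint1 hint2]
  -- bound each term
  have hterm1 : ∫ s in Icc t T, |f (φ ν s) - q (φ ν s)| ≤ ε / 3 := by
    refine le_trans hfq_bound ?_
    calc (C:ℝ) * ∫ s in Icc t T, |f s - q s| ≤ ((C:ℝ) + 1) * δ := by
          refine mul_le_mul (by linarith) hD (integral_nonneg fun s => abs_nonneg _) (by linarith)
      _ = ε / 3 := by
          rw [hδdef]; field_simp
  have hterm2 : ∫ s in Icc t T, |q (φ ν s) - q s| < ε / 3 := by
    have hb : ∫ s in Icc t T, |q (φ ν s) - q s| ≤ ε₃ * (volume (Icc t T)).toReal := by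
      have := norm_setIntegral_le_of_norm_le_const (C := ε₃) (s := Icc t T) (f := fun s => |q (φ ν s) - q s|)
        (by rw [Real.volume_Icc]; exact ENNReal.ofReal_lt_top)
        (fun s hs => by
          rw [Real.norm_eq_abs, abs_abs]
          have := hδ₂imp (show dist (φ ν s) s < δ₂ by
            rw [dist_comm]; exact hν s hs)
          simpa [Real.dist_eq] using this.le)
      calc ∫ s in Icc t T, |q (φ ν s) - q s| ≤ ‖∫ s in Icc t T, |q (φ ν s) - q s|‖ :=
            le_abs_self _
        _ ≤ ε₃ * (volume (Icc t T)).toReal := this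
    have hvol : (volume (Icc t T)).toReal = T - t := by
      rw [Real.volume_Icc, ENNReal.toReal_ofReal hTt.le]
    rw [hvol] at hb
    refine lt_of_le_of_lt hb ?_
    rw [hε₃def]
    rw [div_mul_eq_mul_div, div_lt_div_iff₀ (by positivity) (by norm_num)]
    nlinarith
  have hterm3 : ∫ s in Icc t T, |q s - f s| ≤ ε / 3 := by
    have : ∫ s in Icc t T, |q s - f s| = ∫ s in Icc t T, |f s - q s| := by
      congr 1; ext s; rw [abs_sub_comm]
    rw [this]
    refine le_trans hD ?_
    rw [hδdef]
    rw [div_le_div_iff₀ (by positivity) (by norm_num)]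
    nlinarith
  have hnn : 0 ≤ ∫ s in Icc t T, |f (φ ν s) - f s| := integral_nonneg fun s => abs_nonneg _
  rw [Real.norm_eq_abs, abs_of_nonneg hnn]
  linarith
end

section
/- Suppose for a.e. s and all (z,v) the map r ↦ Λ(s,z,rv) is convex on (0,∞) (radial convexity). Then for every (s,z,v) in the effective domain of Λ, the map μ ↦ μ·Λ(s,z,v/μ) is convex on (0,∞). -/
open MeasureTheory Set
open scoped ENNReal

/-!
Convexity of `μ ↦ μ f(μ⁻¹)` is convexity of `f` at the points `μ₁⁻¹, μ₂⁻¹` with the rescaled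
weights `a μ₁ / μ, b μ₂ / μ`, where `μ = a μ₁ + b μ₂`: these weights sum to `1` and average
`μ₁⁻¹, μ₂⁻¹` to `μ⁻¹`, and multiplying by `μ` turns them back into `a μ₁, b μ₂`.
-/

lemma convex_combination_pos_of_pos {μ₁ μ₂ a b : ℝ} (hμ₁ : 0 < μ₁) (hμ₂ : 0 < μ₂) (ha : 0 ≤ a)
    (hb : 0 ≤ b) (hab : a + b = 1) : 0 < a * μ₁ + b * μ₂ := by
  rcases ha.eq_or_lt with rfl | ha
  · simp only [zero_add] at hab
    simp [hab, hμ₂]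
  · positivity

lemma perspective_le_of_convex {f : ℝ → ℝ≥0∞}
    (hf : ∀ r₁ r₂ a b : ℝ, 0 < r₁ → 0 < r₂ → 0 ≤ a → 0 ≤ b → a + b = 1 →
      f (a * r₁ + b * r₂) ≤ ENNReal.ofReal a * f r₁ + ENNReal.ofReal b * f r₂)
    {μ₁ μ₂ a b : ℝ} (hμ₁ : 0 < μ₁) (hμ₂ : 0 < μ₂) (ha : 0 ≤ a) (hb : 0 ≤ b) (hab : a + b = 1) :
    ENNReal.ofReal (a * μ₁ + b * μ₂) * f (a * μ₁ + b * μ₂)⁻¹ ≤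
      ENNReal.ofReal a * (ENNReal.ofReal μ₁ * f μ₁⁻¹) +
        ENNReal.ofReal b * (ENNReal.ofReal μ₂ * f μ₂⁻¹) := by
  set μ := a * μ₁ + b * μ₂ with hμ_def
  have hμ : 0 < μ := convex_combination_pos_of_pos hμ₁ hμ₂ ha hb hab
  have hweights : a * μ₁ / μ + b * μ₂ / μ = 1 := by
    rw [← add_div, div_self hμ.ne']
  have hpoint : a * μ₁ / μ * μ₁⁻¹ + b * μ₂ / μ * μ₂⁻¹ = μ⁻¹ := by
    field_simp
    linarith
  have hconv := hf μ₁⁻¹ μ₂⁻¹ (a * μ₁ / μ) (b * μ₂ / μ) (inv_pos.2 hμ₁) (inv_pos.2 hμ₂)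
    (by positivity) (by positivity) hweights
  rw [hpoint] at hconv
  have hscale : ∀ {c : ℝ}, 0 ≤ c → ∀ x : ℝ≥0∞,
      ENNReal.ofReal μ * (ENNReal.ofReal (c / μ) * x) = ENNReal.ofReal c * x := by
    intro c hc x
    rw [← mul_assoc, ← ENNReal.ofReal_mul hμ.le, mul_div_cancel₀ _ hμ.ne']
  calc ENNReal.ofReal μ * f μ⁻¹
      ≤ ENNReal.ofReal μ * (ENNReal.ofReal (a * μ₁ / μ) * f μ₁⁻¹ +
          ENNReal.ofReal (b * μ₂ / μ) * f μ₂⁻¹) := mul_le_mul_right hconv _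
    _ = ENNReal.ofReal a * (ENNReal.ofReal μ₁ * f μ₁⁻¹) +
          ENNReal.ofReal b * (ENNReal.ofReal μ₂ * f μ₂⁻¹) := by
      rw [mul_add, hscale (by positivity), hscale (by positivity), ENNReal.ofReal_mul ha,
        ENNReal.ofReal_mul hb, mul_assoc, mul_assoc]

theorem stmt6_general (n : ℕ) (t T : ℝ)
    (Λ : ℝ → EuclideanSpace ℝ (Fin n) → EuclideanSpace ℝ (Fin n) → ℝ≥0∞)
    (hconv : ∀ᵐ s ∂(volume.restrict (Icc t T)),
      ∀ (z v : EuclideanSpace ℝ (Fin n)) (r₁ r₂ a b : ℝ),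
        0 < r₁ → 0 < r₂ → 0 ≤ a → 0 ≤ b → a + b = 1 →
        Λ s z ((a * r₁ + b * r₂) • v) ≤
          ENNReal.ofReal a * Λ s z (r₁ • v) + ENNReal.ofReal b * Λ s z (r₂ • v)) :
    ∀ᵐ s ∂(volume.restrict (Icc t T)),
      ∀ (z v : EuclideanSpace ℝ (Fin n)), Λ s z v ≠ ⊤ →
        ∀ (μ₁ μ₂ a b : ℝ), 0 < μ₁ → 0 < μ₂ → 0 ≤ a → 0 ≤ b → a + b = 1 →
        ENNReal.ofReal (a * μ₁ + b * μ₂) * Λ s z ((a * μ₁ + b * μ₂)⁻¹ • v) ≤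
          ENNReal.ofReal a * (ENNReal.ofReal μ₁ * Λ s z (μ₁⁻¹ • v)) +
          ENNReal.ofReal b * (ENNReal.ofReal μ₂ * Λ s z (μ₂⁻¹ • v)) := by
  filter_upwards [hconv] with s hs z v _ μ₁ μ₂ a b hμ₁ hμ₂ ha hb hab
  exact perspective_le_of_convex (f := fun r => Λ s z (r • v)) (hs z v) hμ₁ hμ₂ ha hb hab

/-- Radial convexity: if for a.e. `s` and all `(z,v)` the map `r ↦ Λ(s,z,rv)` is
convex on `(0,∞)`, then for every `(s,z,v)` in the effective domain of `Λ` the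
perspective-type map `μ ↦ μ·Λ(s,z,v/μ)` is convex on `(0,∞)`. -/
theorem stmt6 (n : ℕ) (t T : ℝ) (ht : t < T)
    (Λ : ℝ → EuclideanSpace ℝ (Fin n) → EuclideanSpace ℝ (Fin n) → ℝ≥0∞)
    (hconv : ∀ᵐ s ∂(volume.restrict (Icc t T)),
      ∀ (z v : EuclideanSpace ℝ (Fin n)) (r₁ r₂ a b : ℝ),
        0 < r₁ → 0 < r₂ → 0 ≤ a → 0 ≤ b → a + b = 1 →
        Λ s z ((a * r₁ + b * r₂) • v) ≤
          ENNReal.ofReal a * Λ s z (r₁ • v) + ENNReal.ofReal b * Λ s z (r₂ • v)) :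
    ∀ᵐ s ∂(volume.restrict (Icc t T)),
      ∀ (z v : EuclideanSpace ℝ (Fin n)), Λ s z v ≠ ⊤ →
        ∀ (μ₁ μ₂ a b : ℝ), 0 < μ₁ → 0 < μ₂ → 0 ≤ a → 0 ≤ b → a + b = 1 →
        ENNReal.ofReal (a * μ₁ + b * μ₂) * Λ s z ((a * μ₁ + b * μ₂)⁻¹ • v) ≤
          ENNReal.ofReal a * (ENNReal.ofReal μ₁ * Λ s z (μ₁⁻¹ • v)) +
          ENNReal.ofReal b * (ENNReal.ofReal μ₂ * Λ s z (μ₂⁻¹ • v)) :=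
  stmt6_general n t T Λ hconv
end

section
/- For h ≥ 1, define y_h : [0,1] → ℝ by y_h(s) = h^{-1/3} for s ∈ [0,1/h] and y_h(s) = s^{1/3} otherwise. Then each y_h is Lipschitz, y_h(1) = 1, F(y_h) = ∫_0¹ (y_h³ − s)²(y_h')⁶ ds → 0 as h → ∞, and y_h → y in W^{1,1}([0,1]) where y(s) = s^{1/3}. -/
open MeasureTheory Set Filter Topology

/-- The truncations `y_h(s) = h^{-1/3}` on `[0,1/h]`, `y_h(s) = s^{1/3}` elsewhere,
are Lipschitz, satisfy `y_h(1) = 1`, their energies `F(y_h)` tend to `0`, and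
`y_h → y` in `W^{1,1}([0,1])` where `y(s) = s^{1/3}`. -/
theorem stmt10 (Y Y' : ℕ → ℝ → ℝ)
    (hY : ∀ (h : ℕ) (s : ℝ),
      Y h s = if s ≤ 1 / (h : ℝ) then (h : ℝ) ^ (-(1:ℝ)/3) else s ^ ((1:ℝ)/3))
    (hY' : ∀ (h : ℕ) (s : ℝ),
      Y' h s = if s ≤ 1 / (h : ℝ) then 0 else s ^ (-(2:ℝ)/3) / 3) :
    (∀ h : ℕ, 1 ≤ h →
      (∃ L : NNReal, LipschitzOnWith L (Y h) (Icc (0:ℝ) 1)) ∧ Y h 1 = 1) ∧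
    Tendsto (fun h : ℕ =>
        ∫ s in (0:ℝ)..1, ((Y h s) ^ 3 - s) ^ 2 * (Y' h s) ^ 6)
      atTop (nhds 0) ∧
    Tendsto (fun h : ℕ =>
        ∫ s in (0:ℝ)..1,
          (|Y h s - s ^ ((1:ℝ)/3)| + |Y' h s - s ^ (-(2:ℝ)/3) / 3|))
      atTop (nhds 0) := by
  refine ⟨fun h hh => ?_, ?_, ?_⟩
  · -- Lipschitz and boundary value
    have hh0 : (0:ℝ) < (h:ℝ) := by exact_mod_cast hh
    have hh1 : (1:ℝ) ≤ (h:ℝ) := by exact_mod_cast hh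
    have hinv0 : (0:ℝ) < 1 / (h:ℝ) := by positivity
    have hinv1 : 1 / (h:ℝ) ≤ 1 := by
      rw [div_le_one hh0]; exact hh1
    constructor
    · -- Lipschitz
      set c : ℝ := 1 / (h:ℝ)
      -- g(x) = x^(1/3) is Lipschitz on [c, 1]
      set K : NNReal := (((h:ℝ) ^ ((2:ℝ)/3)) / 3).toNNReal
      have hg : LipschitzOnWith K (fun x : ℝ => x ^ ((1:ℝ)/3)) (Icc c 1) := by
        apply Convex.lipschitzOnWith_of_nnnorm_hasDerivWithin_le
          (f' := fun x => (1:ℝ)/3 * x ^ ((1:ℝ)/3 - 1)) (convex_Icc c 1)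
        · intro x hx
          have hx0 : x ≠ 0 := (lt_of_lt_of_le hinv0 hx.1).ne'
          exact (Real.hasDerivAt_rpow_const (Or.inl hx0)).hasDerivWithinAt
        · intro x hx
          have hx0 : (0:ℝ) < x := lt_of_lt_of_le hinv0 hx.1
          have hle : x ^ ((1:ℝ)/3 - 1) ≤ c ^ ((1:ℝ)/3 - 1) :=
            Real.rpow_le_rpow_of_nonpos hinv0 hx.1 (by norm_num)
          have hc : c ^ ((1:ℝ)/3 - 1) = (h:ℝ) ^ ((2:ℝ)/3) := by
            rw [show c = ((h:ℝ))⁻¹ by simp [c, one_div],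
              Real.inv_rpow hh0.le, ← Real.rpow_neg hh0.le]
            norm_num
          rw [← NNReal.coe_le_coe, coe_nnnorm, Real.norm_eq_abs,
            abs_of_nonneg (by positivity),
            Real.coe_toNNReal _ (by positivity)]
          rw [hc] at hle
          linarith
      -- max with constant is 1-Lipschitz
      have hmax : LipschitzOnWith 1 (fun x : ℝ => max x c) (Icc (0:ℝ) 1) := by
        have h1 : LipschitzWith 1 (fun x : ℝ => max x c) := by
          simpa using LipschitzWith.id.max_const c
        exact h1.lipschitzOnWith
      have hmaps : MapsTo (fun x : ℝ => max x c) (Icc (0:ℝ) 1) (Icc c 1) :=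
        fun x hx => ⟨le_max_right _ _, max_le hx.2 hinv1⟩
      refine ⟨K * 1, ?_⟩
      have hcomp := hg.comp hmax hmaps
      have heq : EqOn ((fun x : ℝ => x ^ ((1:ℝ)/3)) ∘ fun x : ℝ => max x c)
          (Y h) (Icc (0:ℝ) 1) := by
        intro x hx
        simp only [Function.comp_apply, hY]
        by_cases hxc : x ≤ c
        · rw [if_pos hxc, max_eq_right hxc,
            show c = ((h:ℝ))⁻¹ by simp [c, one_div],
            Real.inv_rpow hh0.le, ← Real.rpow_neg hh0.le]
          norm_num
        · rw [if_neg hxc, max_eq_left (le_of_not_ge hxc)]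
      exact fun x hx y hy => by
        rw [← heq hx, ← heq hy]; exact hcomp hx hy
    · rw [hY]
      by_cases hc : (1:ℝ) ≤ 1 / (h:ℝ)
      · have : (h:ℝ) = 1 := le_antisymm (by
          rwa [le_div_iff₀ hh0, one_mul] at hc) hh1
        rw [if_pos hc, this, Real.one_rpow]
      · rw [if_neg hc, Real.one_rpow]
  · -- energy is identically 0
    have key : ∀ h : ℕ,
        (∫ s in (0:ℝ)..1, ((Y h s) ^ 3 - s) ^ 2 * (Y' h s) ^ 6) = 0 := by
      intro h
      have hz : ∀ s : ℝ, ((Y h s) ^ 3 - s) ^ 2 * (Y' h s) ^ 6 = 0 := by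
        intro s
        by_cases hs : s ≤ 1 / (h:ℝ)
        · rw [hY', if_pos hs]
          ring
        · have hs0 : (0:ℝ) < s :=
            lt_of_le_of_lt (by positivity) (lt_of_not_ge hs)
          rw [hY, if_neg hs]
          have : (s ^ ((1:ℝ)/3)) ^ (3:ℕ) = s := by
            rw [← Real.rpow_natCast (s ^ ((1:ℝ)/3)) 3, ← Real.rpow_mul hs0.le]
            norm_num
          rw [this]
          ring
      simp only [hz, intervalIntegral.integral_zero]
    simp only [key]
    exact tendsto_const_nhds
  · -- W^{1,1} convergence via dominated convergence
    have hmeas : ∀ᶠ h : ℕ in atTop, AEStronglyMeasurable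
        (fun s : ℝ => |Y h s - s ^ ((1:ℝ)/3)| + |Y' h s - s ^ (-(2:ℝ)/3) / 3|)
        (volume.restrict (Set.uIoc (0:ℝ) 1)) := by
      have mrpow : ∀ c : ℝ, Measurable (fun x : ℝ => x ^ c) := fun c => by fun_prop
      filter_upwards with h
      have hYm : Measurable (Y h) := by
        have : Y h = fun s =>
            if s ≤ 1 / (h:ℝ) then (h:ℝ) ^ (-(1:ℝ)/3) else s ^ ((1:ℝ)/3) :=
          funext (hY h)
        rw [this]
        exact Measurable.ite (measurableSet_le measurable_id measurable_const)
          measurable_const (mrpow _)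
      have hY'm : Measurable (Y' h) := by
        have : Y' h = fun s =>
            if s ≤ 1 / (h:ℝ) then 0 else s ^ (-(2:ℝ)/3) / 3 :=
          funext (hY' h)
        rw [this]
        exact Measurable.ite (measurableSet_le measurable_id measurable_const)
          measurable_const ((mrpow _).div_const 3)
      exact ((hYm.sub (mrpow _)).abs.add
        ((hY'm.sub ((mrpow _).div_const 3)).abs)).aestronglyMeasurable
    have hbound : ∀ᶠ h : ℕ in atTop, ∀ᵐ s : ℝ, s ∈ Set.uIoc (0:ℝ) 1 →
        ‖|Y h s - s ^ ((1:ℝ)/3)| + |Y' h s - s ^ (-(2:ℝ)/3) / 3|‖ ≤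
          2 + s ^ (-(2:ℝ)/3) / 3 := by
      filter_upwards [eventually_ge_atTop 1] with h hh
      filter_upwards with s hs
      rw [Set.mem_uIoc] at hs
      have hs01 : 0 < s ∧ s ≤ 1 := by
        rcases hs with hs | hs
        · exact ⟨hs.1, hs.2⟩
        · linarith [hs.1, hs.2]
      obtain ⟨hs0, hs1⟩ := hs01
      have hh0 : (0:ℝ) < (h:ℝ) := by exact_mod_cast hh
      have hh1 : (1:ℝ) ≤ (h:ℝ) := by exact_mod_cast hh
      have hrpos : (0:ℝ) ≤ s ^ (-(2:ℝ)/3) := Real.rpow_nonneg hs0.le _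
      rw [Real.norm_eq_abs, abs_of_nonneg (by positivity)]
      by_cases hsc : s ≤ 1 / (h:ℝ)
      · rw [hY, hY', if_pos hsc, if_pos hsc]
        have h1 : (h:ℝ) ^ (-(1:ℝ)/3) ≤ 1 :=
          Real.rpow_le_one_of_one_le_of_nonpos hh1 (by norm_num)
        have h2 : s ^ ((1:ℝ)/3) ≤ 1 :=
          Real.rpow_le_one hs0.le hs1 (by norm_num)
        have h3 : (0:ℝ) ≤ (h:ℝ) ^ (-(1:ℝ)/3) := Real.rpow_nonneg hh0.le _
        have h4 : (0:ℝ) ≤ s ^ ((1:ℝ)/3) := Real.rpow_nonneg hs0.le _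
        have habs1 : |(h:ℝ) ^ (-(1:ℝ)/3) - s ^ ((1:ℝ)/3)| ≤ 2 := by
          rw [abs_le]; constructor <;> linarith
        have habs2 : |0 - s ^ (-(2:ℝ)/3) / 3| = s ^ (-(2:ℝ)/3) / 3 := by
          rw [zero_sub, abs_neg, abs_of_nonneg (by positivity)]
        rw [habs2]
        linarith
      · rw [hY, hY', if_neg hsc, if_neg hsc]
        simp only [sub_self, abs_zero, add_zero]
        positivity
    have hint : IntervalIntegrable (fun s : ℝ => 2 + s ^ (-(2:ℝ)/3) / 3)
        volume 0 1 :=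
      intervalIntegrable_const.add
        ((intervalIntegral.intervalIntegrable_rpow'
          (by norm_num : (-1:ℝ) < -(2:ℝ)/3)).div_const 3)
    have hlim : ∀ᵐ s : ℝ, s ∈ Set.uIoc (0:ℝ) 1 →
        Tendsto (fun h : ℕ => |Y h s - s ^ ((1:ℝ)/3)| + |Y' h s - s ^ (-(2:ℝ)/3) / 3|)
          atTop (nhds ((fun _ : ℝ => (0:ℝ)) s)) := by
      filter_upwards with s hs
      rw [Set.mem_uIoc] at hs
      have hs0 : 0 < s := by
        rcases hs with hs | hs
        · exact hs.1
        · linarith [hs.1, hs.2]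
      intro _
      apply Tendsto.congr' _ tendsto_const_nhds
      filter_upwards [eventually_ge_atTop (⌈s⁻¹⌉₊ + 1)] with h hh
      have hh0 : (0:ℝ) < (h:ℝ) := by
        have : 1 ≤ h := le_trans (Nat.le_add_left 1 _) hh
        exact_mod_cast Nat.lt_of_lt_of_le Nat.zero_lt_one this
      have hgt : s⁻¹ < (h:ℝ) := by
        have h1 : (s⁻¹ : ℝ) ≤ (⌈s⁻¹⌉₊ : ℝ) := Nat.le_ceil _
        have h2 : ((⌈s⁻¹⌉₊ + 1 : ℕ) : ℝ) ≤ (h:ℝ) := by exact_mod_cast hh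
        push_cast at h2
        linarith
      have hsc : ¬ s ≤ 1 / (h:ℝ) := by
        rw [not_le, div_lt_iff₀ hh0]
        have := mul_lt_mul_of_pos_left hgt hs0
        rwa [mul_inv_cancel₀ hs0.ne'] at this
      rw [hY, hY', if_neg hsc, if_neg hsc]
      simp
    have main := intervalIntegral.tendsto_integral_filter_of_dominated_convergence
      (μ := volume) (a := (0:ℝ)) (b := 1) (f := fun _ : ℝ => (0:ℝ))
      (bound := fun s : ℝ => 2 + s ^ (-(2:ℝ)/3) / 3) hmeas hbound hint hlim
    simpa using main
end

section
/- Let y ∈ C¹([0,1)) ∩ W^{1,1}([0,1]) with y(0)=0, y(1)=1, y' > 0 on [0,1), and y'(s) → +∞ as s → 1⁻. Set q(z) := y'(y⁻¹(z)) for z ∈ [0,1). Then there is no Lipschitz function z : [0,1] → ℝ with z(0)=0, z(1)=1 and z'(s) ≤ q(z(s)) for a.e. s ∈ [0,1]. -/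
open MeasureTheory Set Filter Topology

lemma lip_ae_mvt (w W' : ℝ → ℝ) (K : NNReal) (hK : (1:ℝ) ≤ K) (hw : LipschitzWith K w)
    (hd : ∀ᵐ s ∂(volume.restrict (Icc (0:ℝ) 1)), HasDerivAt w (W' s) s ∧ W' s ≤ 1)
    {a b : ℝ} (ha : 0 ≤ a) (hab : a ≤ b) (hb : b ≤ 1) : w b - w a ≤ b - a := by
  have hmono : Monotone (fun s => (K:ℝ) * s - w s) := by
    intro s t hst
    have h1 : |w t - w s| ≤ (K:ℝ) * |t - s| := by
      have := hw.dist_le_mul t s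
      rwa [Real.dist_eq, Real.dist_eq] at this
    rw [abs_of_nonneg (by linarith : (0:ℝ) ≤ t - s)] at h1
    have h2 := (abs_le.1 h1).2
    simp only []
    linarith
  set g : StieltjesFunction ℝ :=
    { toFun := fun s => (K:ℝ) * s - w s
      mono' := hmono
      right_continuous' := by
        intro x
        exact ((continuous_const.mul continuous_id).sub hw.continuous).continuousWithinAt }
    with hg
  have hgae := g.ae_hasDerivAt
  have key : ∀ᵐ x ∂(volume.restrict (Icc (0:ℝ) 1)),
      ENNReal.ofReal ((K:ℝ) - 1) ≤ Measure.rnDeriv g.measure volume x := by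
    filter_upwards [hd, ae_restrict_of_ae hgae] with x hx hgx
    have hdg : HasDerivAt g ((K:ℝ) - W' x) x := by
      have h := ((hasDerivAt_id x).const_mul (K:ℝ)).sub hx.1
      rw [mul_one] at h
      exact h
    have heq : (Measure.rnDeriv g.measure volume x).toReal = (K:ℝ) - W' x :=
      hgx.unique hdg
    rcases eq_or_ne (Measure.rnDeriv g.measure volume x) ⊤ with h | h
    · simp [h]
    · rw [ENNReal.ofReal_le_iff_le_toReal h, heq]
      linarith [hx.2]
  have key2 : ∀ᵐ x ∂(volume.restrict (Ioc a b)),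
      ENNReal.ofReal ((K:ℝ) - 1) ≤ Measure.rnDeriv g.measure volume x :=
    ae_mono (Measure.restrict_mono (Ioc_subset_Icc_self.trans (Icc_subset_Icc ha hb))
      le_rfl) key
  have h1 : ENNReal.ofReal ((K:ℝ) - 1) * volume (Ioc a b)
      ≤ ∫⁻ x in Ioc a b, Measure.rnDeriv g.measure volume x := by
    rw [← setLIntegral_const]
    exact lintegral_mono_ae key2
  have h2 : (∫⁻ x in Ioc a b, Measure.rnDeriv g.measure volume x) ≤ g.measure (Ioc a b) := by
    have := Measure.withDensity_rnDeriv_le g.measure volume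
    have h3 := this (Ioc a b)
    rwa [withDensity_apply _ measurableSet_Ioc] at h3
  rw [g.measure_Ioc, Real.volume_Ioc] at *
  have h4 : ENNReal.ofReal (((K:ℝ) - 1) * (b - a)) ≤ ENNReal.ofReal (g b - g a) := by
    rw [ENNReal.ofReal_mul (by linarith)]
    exact h1.trans h2
  have h5 : ((K:ℝ) - 1) * (b - a) ≤ g b - g a :=
    (ENNReal.ofReal_le_ofReal_iff (by linarith [hmono hab])).1 h4
  have hKb : ((K:ℝ) - 1) * (b - a) ≤ ((K:ℝ) * b - w b) - ((K:ℝ) * a - w a) := h5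
  nlinarith

/-- If `y ∈ C¹([0,1)) ∩ W^{1,1}([0,1])` with `y(0)=0`, `y(1)=1`, `y' > 0` on `[0,1)`
and `y'(s) → +∞` as `s → 1⁻`, and `q(y(s)) = y'(s)` (i.e. `q = y' ∘ y⁻¹`), then there
is no Lipschitz `z : [0,1] → ℝ` with `z(0)=0`, `z(1)=1` and `z'(s) ≤ q(z(s))` a.e. -/
theorem stmt11 (y y' q : ℝ → ℝ)
    (hy0 : y 0 = 0) (hy1 : y 1 = 1)
    (hC1 : ∀ s ∈ Ico (0:ℝ) 1, HasDerivAt y (y' s) s)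
    (hcont : ContinuousOn y' (Ico (0:ℝ) 1))
    (hpos : ∀ s ∈ Ico (0:ℝ) 1, 0 < y' s)
    (hinf : Tendsto y' (nhdsWithin 1 (Iio 1)) atTop)
    (hint : IntegrableOn y' (Icc (0:ℝ) 1))
    (hAC : ∀ x ∈ Icc (0:ℝ) 1, y x = ∫ u in (0:ℝ)..x, y' u)
    (hq : ∀ s ∈ Ico (0:ℝ) 1, q (y s) = y' s) :
    ¬ ∃ (z z' : ℝ → ℝ) (Lz : NNReal),
        LipschitzOnWith Lz z (Icc (0:ℝ) 1) ∧
        z 0 = 0 ∧ z 1 = 1 ∧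
        (∀ᵐ s ∂(volume.restrict (Icc (0:ℝ) 1)), HasDerivAt z (z' s) s) ∧
        (∀ᵐ s ∂(volume.restrict (Icc (0:ℝ) 1)),
          z s ∈ Ico (0:ℝ) 1 ∧ z' s ≤ q (z s)) := by
  rintro ⟨z, z', Lz, hzlip, hz0, hz1, hzd, hzb⟩
  have h01 : (0:ℝ) ∈ Ico (0:ℝ) 1 := ⟨le_refl _, one_pos⟩
  have hy'0 : 0 < y' 0 := hpos 0 h01
  -- a positive lower bound `c ≤ 1` for `y'` on `[0,1)`
  obtain ⟨c, hcpos, hc1, hcy⟩ : ∃ c : ℝ, 0 < c ∧ c ≤ 1 ∧ ∀ s ∈ Ico (0:ℝ) 1, c ≤ y' s := by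
    have hev : ∀ᶠ s in 𝓝[<] (1:ℝ), (1:ℝ) ≤ y' s := hinf.eventually (eventually_ge_atTop 1)
    obtain ⟨l, hl, hsub⟩ := mem_nhdsLT_iff_exists_Ioo_subset.1 hev
    set u : ℝ := max l 0 with hu
    have hu1 : u < 1 := by
      simp only [hu, max_lt_iff]
      exact ⟨hl, one_pos⟩
    have hucont : ContinuousOn y' (Icc 0 u) :=
      hcont.mono (fun t ht => ⟨ht.1, lt_of_le_of_lt ht.2 hu1⟩)
    obtain ⟨x₀, hx₀mem, hx₀min⟩ := isCompact_Icc.exists_isMinOn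
      (nonempty_Icc.2 (le_max_right l 0)) hucont
    refine ⟨min (y' x₀) 1, lt_min (hpos x₀ ⟨hx₀mem.1, lt_of_le_of_lt hx₀mem.2 hu1⟩) one_pos,
      min_le_right _ _, ?_⟩
    intro s hs
    rcases le_total s u with h | h
    · exact le_trans (min_le_left _ _) (hx₀min ⟨hs.1, h⟩)
    · rcases eq_or_lt_of_le h with h' | h'
      · exact le_trans (min_le_left _ _) (hx₀min ⟨hs.1, h'.ge⟩)
      · refine le_trans (min_le_right _ _) (hsub ⟨lt_of_le_of_lt (le_max_left l 0) h', hs.2⟩)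
  -- continuity of y on [0,1]
  have hycont : ContinuousOn y (Icc (0:ℝ) 1) := by
    have h := intervalIntegral.continuousOn_primitive_interval (a := (0:ℝ)) (b := 1)
      (μ := volume) (f := y') (by rwa [uIcc_of_le zero_le_one])
    rw [uIcc_of_le zero_le_one] at h
    exact h.congr (fun x hx => hAC x hx)
  -- slope lower bound for y
  have hylow : ∀ a b : ℝ, 0 ≤ a → a ≤ b → b ≤ 1 → c * (b - a) ≤ y b - y a := by
    intro a b ha hab hb
    have hiab : IntervalIntegrable y' volume a b := by
      refine (hint.mono_set ?_).intervalIntegrable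
      rw [uIcc_of_le hab]; exact Icc_subset_Icc ha hb
    have hi0a : IntervalIntegrable y' volume 0 a := by
      refine (hint.mono_set ?_).intervalIntegrable
      rw [uIcc_of_le ha]; exact Icc_subset_Icc le_rfl (hab.trans hb)
    have hi0b : IntervalIntegrable y' volume 0 b := by
      refine (hint.mono_set ?_).intervalIntegrable
      rw [uIcc_of_le (ha.trans hab)]; exact Icc_subset_Icc le_rfl hb
    have e : y b - y a = ∫ u in a..b, y' u := by
      rw [hAC b ⟨ha.trans hab, hb⟩, hAC a ⟨ha, hab.trans hb⟩]
      exact intervalIntegral.integral_interval_sub_left hi0b hi0a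
    have hae : (fun _ => c) ≤ᵐ[volume.restrict (Icc a b)] y' := by
      have hne : ∀ᵐ s : ℝ, s ≠ 1 := by
        rw [ae_iff]
        have : {s : ℝ | ¬s ≠ 1} = {1} := by ext s; simp
        rw [this]; exact measure_singleton 1
      filter_upwards [ae_restrict_of_ae hne, ae_restrict_mem measurableSet_Icc] with s hs hs'
      exact hcy s ⟨ha.trans hs'.1, lt_of_le_of_ne (hs'.2.trans hb) hs⟩
    have := intervalIntegral.integral_mono_ae_restrict hab intervalIntegrable_const hiab hae
    rw [intervalIntegral.integral_const] at this
    rw [e]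
    simpa [smul_eq_mul, mul_comm] using this
  -- the extension Y of y
  set Y : ℝ → ℝ := fun t => y' 0 * min t 0 + y (min (max t 0) 1) + max (t - 1) 0 with hYdef
  have hYneg : ∀ t : ℝ, t ≤ 0 → Y t = y' 0 * t := by
    intro t ht
    simp only [hYdef, min_eq_left ht, max_eq_right ht]
    rw [min_eq_left zero_le_one, hy0, max_eq_right (by linarith)]
    ring
  have hYmid : ∀ t ∈ Icc (0:ℝ) 1, Y t = y t := by
    intro t ht
    simp only [hYdef, min_eq_right ht.1, max_eq_left ht.1, min_eq_left ht.2,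
      max_eq_right (by linarith [ht.2] : t - 1 ≤ 0)]
    ring
  have hYtop : ∀ t : ℝ, 1 ≤ t → Y t = t := by
    intro t ht
    simp only [hYdef, min_eq_right (by linarith : (0:ℝ) ≤ t), max_eq_left (by linarith : (0:ℝ) ≤ t),
      min_eq_right ht, max_eq_left (by linarith : (0:ℝ) ≤ t - 1), hy1]
    ring
  have hY0 : Y 0 = 0 := by rw [hYmid 0 ⟨le_rfl, zero_le_one⟩, hy0]
  have hY1 : Y 1 = 1 := hYtop 1 le_rfl
  set m : ℝ := min (y' 0) c with hmdef
  have hm : 0 < m := lt_min hy'0 hcpos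
  have hm1 : m ≤ 1 := le_trans (min_le_right _ _) hc1
  have hslope : ∀ s t : ℝ, s ≤ t → m * (t - s) ≤ Y t - Y s := by
    have L1 : ∀ s t : ℝ, s ≤ t → t ≤ 0 → m * (t - s) ≤ Y t - Y s := by
      intro s t hst ht
      rw [hYneg t ht, hYneg s (hst.trans ht)]
      have : m ≤ y' 0 := min_le_left _ _
      nlinarith
    have L2 : ∀ s t : ℝ, 0 ≤ s → s ≤ t → t ≤ 1 → m * (t - s) ≤ Y t - Y s := by
      intro s t hs hst ht
      rw [hYmid t ⟨hs.trans hst, ht⟩, hYmid s ⟨hs, hst.trans ht⟩]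
      have h1 := hylow s t hs hst ht
      have : m ≤ c := min_le_right _ _
      nlinarith
    have L3 : ∀ s t : ℝ, 1 ≤ s → s ≤ t → m * (t - s) ≤ Y t - Y s := by
      intro s t hs hst
      rw [hYtop t (hs.trans hst), hYtop s hs]
      nlinarith
    intro s t hst
    rcases le_total t 0 with h | h
    · exact L1 s t hst h
    rcases le_total 1 s with h' | h'
    · exact L3 s t h' hst
    rcases le_total 0 s with hs0 | hs0
    · rcases le_total t 1 with ht1 | ht1
      · exact L2 s t hs0 hst ht1
      · have a1 := L2 s 1 hs0 h' le_rfl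
        have a2 := L3 1 t le_rfl ht1
        linarith
    · rcases le_total t 1 with ht1 | ht1
      · have a1 := L1 s 0 hs0 le_rfl
        have a2 := L2 0 t le_rfl h ht1
        linarith
      · have a1 := L1 s 0 hs0 le_rfl
        have a2 := L2 0 1 le_rfl zero_le_one le_rfl
        have a3 := L3 1 t le_rfl ht1
        linarith
  have hYmono : StrictMono Y := by
    intro s t hst
    have := hslope s t hst.le
    nlinarith
  have hYcont : Continuous Y := by
    have hclamp : Continuous fun t : ℝ => min (max t 0) 1 :=
      (continuous_id.max continuous_const).min continuous_const
    have hrange : ∀ t : ℝ, min (max t 0) 1 ∈ Icc (0:ℝ) 1 :=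
      fun t => ⟨le_min (le_max_right t 0) zero_le_one, min_le_right _ _⟩
    exact ((continuous_const.mul (continuous_id.min continuous_const)).add
      (hycont.comp_continuous hclamp hrange)).add
      ((continuous_id.sub continuous_const).max continuous_const)
  have hYsurj : Function.Surjective Y := by
    refine hYcont.surjective ?_ ?_
    · refine Tendsto.congr' ?_ tendsto_id
      filter_upwards [eventually_ge_atTop (1:ℝ)] with t ht using (hYtop t ht).symm
    · refine Tendsto.congr' ?_ (tendsto_id.const_mul_atBot hy'0)
      filter_upwards [eventually_le_atBot (0:ℝ)] with t ht using (hYneg t ht).symm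
  set e := StrictMono.orderIsoOfSurjective Y hYmono hYsurj with hedef
  set Yinv : ℝ → ℝ := fun x => e.symm x with hYinvdef
  have hYYinv : ∀ x, Y (Yinv x) = x := fun x => e.apply_symm_apply x
  have hYinvY : ∀ t, Yinv (Y t) = t := fun t => e.symm_apply_apply t
  set M : NNReal := (1 / m).toNNReal with hMdef
  have hMcoe : (M : ℝ) = 1 / m := Real.coe_toNNReal _ (by positivity)
  have hYinvLip : LipschitzWith M Yinv := by
    refine LipschitzWith.of_dist_le_mul ?_
    have hstep : ∀ p r : ℝ, Yinv r ≤ Yinv p → dist (Yinv p) (Yinv r) ≤ (M:ℝ) * dist p r := by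
      intro p r hpr
      have hs := hslope _ _ hpr
      rw [hYYinv, hYYinv] at hs
      have hrp : r ≤ p := by
        have := hYmono.le_iff_le.2 hpr
        rwa [hYYinv, hYYinv] at this
      rw [Real.dist_eq, Real.dist_eq, abs_of_nonneg (by linarith), abs_of_nonneg (by linarith),
        hMcoe]
      rw [div_mul_eq_mul_div, one_mul, le_div_iff₀ hm]
      nlinarith
    intro p r
    rcases le_total (Yinv r) (Yinv p) with h | h
    · exact hstep p r h
    · rw [dist_comm (Yinv p), dist_comm p]
      exact hstep r p h
  -- the function w = Yinv ∘ z
  set w : ℝ → ℝ := fun s => Yinv (z s) with hwdef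
  have hYinv0 : Yinv 0 = 0 := by
    have h := hYinvY 0
    rwa [hY0] at h
  have hYinv1 : Yinv 1 = 1 := by
    have h := hYinvY 1
    rwa [hY1] at h
  have hwlip : LipschitzOnWith (M * Lz) w (Icc (0:ℝ) 1) :=
    hYinvLip.comp_lipschitzOnWith hzlip
  obtain ⟨wt, hwtlip, hwteq⟩ := hwlip.extend_real
  set K : NNReal := max (M * Lz) 1 with hKdef
  have hwtlip' : LipschitzWith K wt := hwtlip.weaken (le_max_left _ _)
  have hK1 : (1:ℝ) ≤ K := by
    have : (1:NNReal) ≤ K := le_max_right _ _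
    exact_mod_cast this
  set W' : ℝ → ℝ := fun s => (y' (Yinv (z s)))⁻¹ * z' s with hW'def
  have haeIoo : ∀ᵐ s ∂(volume.restrict (Icc (0:ℝ) 1)), s ∈ Ioo (0:ℝ) 1 := by
    rw [ae_iff]
    rw [Measure.restrict_apply' measurableSet_Icc]
    refine measure_mono_null (t := ({0, 1} : Set ℝ)) (fun s hs => ?_) ?_
    · show s ∈ ({0, 1} : Set ℝ)
      obtain ⟨hs1, hs2⟩ := hs
      simp only [mem_setOf_eq, mem_Ioo, not_and_or, not_lt] at hs1
      rcases hs1 with h | h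
      · left; exact le_antisymm h hs2.1
      · right; exact le_antisymm hs2.2 h
    · exact measure_union_null (measure_singleton 0) (measure_singleton 1)
  have hkey : ∀ᵐ s ∂(volume.restrict (Icc (0:ℝ) 1)), HasDerivAt wt (W' s) s ∧ W' s ≤ 1 := by
    filter_upwards [hzd, hzb, haeIoo] with s hds hbs hsIoo
    obtain ⟨hzs, hzb'⟩ := hbs
    set σ := Yinv (z s) with hσdef
    have hzY : Y σ = z s := hYYinv _
    have hσ0 : 0 ≤ σ := by
      have : Y 0 ≤ Y σ := by rw [hY0, hzY]; exact hzs.1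
      exact hYmono.le_iff_le.1 this
    have hσ1 : σ < 1 := by
      have : Y σ < Y 1 := by rw [hY1, hzY]; exact hzs.2
      exact hYmono.lt_iff_lt.1 this
    have hyσ : y σ = z s := by rw [← hzY, hYmid σ ⟨hσ0, hσ1.le⟩]
    have hydσ : HasDerivAt Y (y' σ) σ := by
      rcases eq_or_lt_of_le hσ0 with h0 | h0
      · -- σ = 0
        have hIcc : HasDerivWithinAt Y (y' 0) (Icc 0 1) 0 :=
          ((hC1 0 h01).hasDerivWithinAt).congr (fun t ht => hYmid t ht)
            (hYmid 0 ⟨le_rfl, zero_le_one⟩)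
        have hIic : HasDerivWithinAt Y (y' 0) (Iic 0) 0 := by
          have hlin : HasDerivAt (fun t : ℝ => y' 0 * t) (y' 0) 0 := by
            simpa using (hasDerivAt_id (0:ℝ)).const_mul (y' 0)
          exact hlin.hasDerivWithinAt.congr (fun t ht => hYneg t ht)
            (by rw [hYneg 0 le_rfl])
        have hun := hIcc.union hIic
        have hset : Icc (0:ℝ) 1 ∪ Iic 0 = Iic 1 := by
          ext x
          simp only [mem_union, mem_Icc, mem_Iic]
          constructor
          · rintro (⟨_, h⟩ | h) <;> linarith
          · intro h
            rcases le_total x 0 with h' | h'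
            · right; exact h'
            · left; exact ⟨h', h⟩
        rw [hset] at hun
        have := hun.hasDerivAt (Iic_mem_nhds one_pos)
        rw [← h0]
        exact this
      · refine (hC1 σ ⟨hσ0, hσ1⟩).congr_of_eventuallyEq ?_
        filter_upwards [Ioo_mem_nhds h0 hσ1] with t ht using hYmid t ⟨ht.1.le, ht.2.le⟩
    have hne : y' σ ≠ 0 := ne_of_gt (hpos σ ⟨hσ0, hσ1⟩)
    have hinv : HasDerivAt Yinv ((y' σ)⁻¹) (z s) :=
      HasDerivAt.of_local_left_inverse hYinvLip.continuous.continuousAt hydσ hne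
        (Eventually.of_forall hYYinv)
    have hcomp : HasDerivAt (fun t => Yinv (z t)) ((y' σ)⁻¹ * z' s) s := hinv.comp s hds
    constructor
    · refine hcomp.congr_of_eventuallyEq ?_
      filter_upwards [Icc_mem_nhds hsIoo.1 hsIoo.2] with t ht using (hwteq ht).symm
    · have hzq : z' s ≤ y' σ := by
        rw [← hq σ ⟨hσ0, hσ1⟩, hyσ]; exact hzb'
      have hpσ : 0 < y' σ := hpos σ ⟨hσ0, hσ1⟩
      calc (y' σ)⁻¹ * z' s ≤ (y' σ)⁻¹ * y' σ :=
            mul_le_mul_of_nonneg_left hzq (inv_nonneg.2 hpσ.le)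
        _ = 1 := inv_mul_cancel₀ hne
  have hwt0 : wt 0 = 0 := by rw [← hwteq ⟨le_rfl, zero_le_one⟩]; show Yinv (z 0) = 0; rw [hz0, hYinv0]
  have hwt1 : wt 1 = 1 := by rw [← hwteq ⟨zero_le_one, le_rfl⟩]; show Yinv (z 1) = 1; rw [hz1, hYinv1]
  have hwid : ∀ s ∈ Icc (0:ℝ) 1, wt s = s := by
    intro s hs
    have h1 : wt s - wt 0 ≤ s - 0 := lip_ae_mvt wt W' K hK1 hwtlip' hkey le_rfl hs.1 hs.2
    have h2 : wt 1 - wt s ≤ 1 - s := lip_ae_mvt wt W' K hK1 hwtlip' hkey hs.1 hs.2 le_rfl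
    rw [hwt0] at h1
    rw [hwt1] at h2
    linarith
  have hzy : ∀ s ∈ Icc (0:ℝ) 1, z s = y s := by
    intro s hs
    have h1 : Yinv (z s) = s := by
      have := hwid s hs
      rw [← hwteq hs] at this
      exact this
    have h2 := (hYYinv (z s)).symm
    rw [h1] at h2
    rw [h2, hYmid s hs]
  -- final contradiction
  have hev : ∀ᶠ s in 𝓝[<] (1:ℝ), (Lz:ℝ) < y' s := hinf.eventually (eventually_gt_atTop _)
  have hmem : Ioo (0:ℝ) 1 ∈ 𝓝[<] (1:ℝ) :=
    Ioo_mem_nhdsLT_of_mem ⟨one_pos, le_rfl⟩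
  obtain ⟨sb, hsb1, hsb2⟩ := (hev.and (eventually_of_mem hmem fun x hx => hx)).exists
  have hylip : LipschitzOnWith Lz y (Icc (0:ℝ) 1) := by
    intro p hp r hr
    have := hzlip hp hr
    rwa [hzy p hp, hzy r hr] at this
  have hnhds : Icc (0:ℝ) 1 ∈ 𝓝 sb := Icc_mem_nhds hsb2.1 hsb2.2
  have hfd := (hC1 sb ⟨hsb2.1.le, hsb2.2⟩).hasFDerivAt
  have hle := hfd.le_of_lipschitzOn hnhds hylip
  rw [ContinuousLinearMap.norm_toSpanSingleton] at hle
  simp only [norm_one, one_mul, Real.norm_eq_abs] at hle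
  have := le_abs_self (y' sb)
  linarith
end

section
/- In Manià's example, for ν ≥ 2 define y_ν(s) = νs for 0 ≤ s < s₀(ν) := 1/(√3 ν^{3/2}) and y_ν(s) = (s − 2/(3√3 ν^{3/2}))^{1/3} for s₀(ν) ≤ s ≤ 1. Then y_ν is Lipschitz with ‖y_ν'‖_∞ ≤ ν, y_ν(0) = 0, and y_ν → y in W^{1,1}([0,1]) where y(s) = s^{1/3}, while F(y_ν) = ∫_0¹ (y_ν³ − s)²(y_ν')⁶ ds ≥ (68/(945√3))·ν^{3/2} → +∞. -/
/-!
Write `ν = 1 / (3r²)`. Then `y_ν` is the tangent from the origin to the translated cube root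
`(s - 2r³)^(1/3)`, touching it at `s = 3r³` at height `r`; the junction is `C¹`, and beyond it the
derivative `(s - 2r³)^(-2/3) / 3` is at most its value `ν` there, so `y_ν` is `ν`-Lipschitz.
On the tangent segment `(y_ν³ - s)²` is of order `s²` while `y_ν' = ν`, and this segment alone
contributes `68 / (8505 r³)` to the energy. The `W^{1,1}` distance to `s^(1/3)` is `O(r)`: on the
segment both functions are `O(r)` and `∫₀^{3r³} s^(-2/3)/3 = (3r³)^(1/3)`; beyond it
`s^(1/3) - (s - 2r³)^(1/3) ≤ (2r³)^(1/3)` by subadditivity, and the gap of the derivatives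
integrates to at most `(3r³)^(1/3) - r`.
-/

open MeasureTheory Set Filter Topology
open scoped NNReal

theorem Real.pow_three_rpow_one_third {x : ℝ} (hx : 0 ≤ x) : (x ^ 3) ^ ((1:ℝ)/3) = x := by
  simpa using Real.pow_rpow_inv_natCast hx three_ne_zero

theorem Real.pow_three_rpow_neg_two_thirds {x : ℝ} (hx : 0 ≤ x) :
    (x ^ 3) ^ (-(2:ℝ)/3) = (x ^ 2)⁻¹ := by
  rw [← Real.rpow_natCast, ← Real.rpow_mul hx, ← Real.rpow_two, ← Real.rpow_neg hx]
  norm_num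

theorem Real.rpow_one_third_le {x c : ℝ} (hx : 0 ≤ x) (hc : 0 ≤ c) (h : x ≤ c ^ 3) :
    x ^ ((1:ℝ)/3) ≤ c :=
  (Real.rpow_le_rpow hx h (by norm_num)).trans_eq (Real.pow_three_rpow_one_third hc)

theorem LipschitzOnWith.union_Icc_Ici {E : Type*} [PseudoMetricSpace E] {f : ℝ → E} {K : ℝ≥0}
    {a b : ℝ} (h₁ : LipschitzOnWith K f (Icc a b)) (h₂ : LipschitzOnWith K f (Ici b)) :
    LipschitzOnWith K f (Ici a) := by
  refine LipschitzOnWith.of_dist_le_mul fun x hx y hy => ?_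
  wlog hxy : x ≤ y generalizing x y
  · rw [dist_comm, dist_comm x]
    exact this y hy x hx (le_of_not_ge hxy)
  rcases le_total y b with hyb | hby
  · exact h₁.dist_le_mul x ⟨hx, hxy.trans hyb⟩ y ⟨hy, hyb⟩
  rcases le_total b x with hbx | hxb
  · exact h₂.dist_le_mul x hbx y hby
  calc dist (f x) (f y) ≤ dist (f x) (f b) + dist (f b) (f y) := dist_triangle _ _ _
    _ ≤ K * dist x b + K * dist b y :=
        add_le_add (h₁.dist_le_mul x ⟨hx, hxb⟩ b ⟨mem_Ici.1 hx |>.trans hxb, le_rfl⟩)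
          (h₂.dist_le_mul b self_mem_Ici y hby)
    _ = K * dist x y := by
        rw [Real.dist_eq, Real.dist_eq, Real.dist_eq, abs_of_nonpos (by linarith),
          abs_of_nonpos (by linarith), abs_of_nonpos (by linarith)]
        ring

theorem Real.lipschitzOnWith_sub_rpow {a c p : ℝ} (hac : a < c) (hp₀ : 0 ≤ p) (hp₁ : p ≤ 1) :
    LipschitzOnWith (p * (c - a) ^ (p - 1)).toNNReal (fun x => (x - a) ^ p) (Ici c) := by
  refine (convex_Ici c).lipschitzOnWith_of_nnnorm_hasDerivWithin_le
    (f' := fun x => p * (x - a) ^ (p - 1)) (fun x hx => ?_) fun x hx => ?_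
  · have hxa : x - a ≠ 0 := by linarith [mem_Ici.1 hx]
    simpa using (((hasDerivAt_id x).sub_const a).rpow_const (Or.inl hxa)).hasDerivWithinAt
  · have hxa : 0 < x - a := by linarith [mem_Ici.1 hx]
    rw [← NNReal.coe_le_coe, coe_nnnorm, Real.norm_of_nonneg (by positivity),
      Real.coe_toNNReal _ (by have := hac; positivity)]
    exact mul_le_mul_of_nonneg_left
      (Real.rpow_le_rpow_of_nonpos (by linarith) (by linarith [mem_Ici.1 hx]) (by linarith)) hp₀

namespace Mania

/-- With `r = radius ν = (3ν)^(-1/2)`, `approx r` is the paper's `y_ν` and `approxDeriv r` its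
derivative `y_ν'`. -/
noncomputable def approx (r s : ℝ) : ℝ :=
  if s < 3 * r ^ 3 then s / (3 * r ^ 2) else (s - 2 * r ^ 3) ^ ((1:ℝ)/3)

noncomputable def approxDeriv (r s : ℝ) : ℝ :=
  if s < 3 * r ^ 3 then 1 / (3 * r ^ 2) else 1 / 3 * (s - 2 * r ^ 3) ^ (-(2:ℝ)/3)

variable {r s : ℝ}

theorem approx_of_le (hr : 0 < r) (hs : s ≤ 3 * r ^ 3) : approx r s = s / (3 * r ^ 2) := by
  rcases hs.lt_or_eq with hs | rfl
  · exact if_pos hs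
  · rw [approx, if_neg (lt_irrefl _), show 3 * r ^ 3 - 2 * r ^ 3 = r ^ 3 by ring,
      Real.pow_three_rpow_one_third hr.le]
    field_simp

theorem approx_of_ge (hs : 3 * r ^ 3 ≤ s) : approx r s = (s - 2 * r ^ 3) ^ ((1:ℝ)/3) :=
  if_neg hs.not_gt

theorem approxDeriv_of_le (hr : 0 < r) (hs : s ≤ 3 * r ^ 3) :
    approxDeriv r s = 1 / (3 * r ^ 2) := by
  rcases hs.lt_or_eq with hs | rfl
  · exact if_pos hs
  · rw [approxDeriv, if_neg (lt_irrefl _), show 3 * r ^ 3 - 2 * r ^ 3 = r ^ 3 by ring,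
      Real.pow_three_rpow_neg_two_thirds hr.le]
    field_simp

theorem approxDeriv_of_ge (hs : 3 * r ^ 3 ≤ s) :
    approxDeriv r s = 1 / 3 * (s - 2 * r ^ 3) ^ (-(2:ℝ)/3) :=
  if_neg hs.not_gt

theorem approx_zero (hr : 0 < r) : approx r 0 = 0 := by
  rw [approx_of_le hr (by positivity), zero_div]

theorem lipschitzOnWith_approx (hr : 0 < r) :
    LipschitzOnWith (1 / (3 * r ^ 2)).toNNReal (approx r) (Ici 0) := by
  refine LipschitzOnWith.union_Icc_Ici (b := 3 * r ^ 3) ?_ ?_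
  · refine LipschitzOnWith.of_dist_le_mul fun x hx y hy => ?_
    rw [approx_of_le hr hx.2, approx_of_le hr hy.2, Real.coe_toNNReal _ (by positivity),
      Real.dist_eq, Real.dist_eq, ← sub_div, abs_div, abs_of_pos (by positivity : 0 < 3 * r ^ 2)]
    exact le_of_eq (by ring)
  · have hcube := Real.lipschitzOnWith_sub_rpow (a := 2 * r ^ 3) (c := 3 * r ^ 3) (p := 1 / 3)
      (by nlinarith [pow_pos hr 3]) (by norm_num) (by norm_num)
    rw [show 3 * r ^ 3 - 2 * r ^ 3 = r ^ 3 by ring, show (1:ℝ) / 3 - 1 = -(2:ℝ)/3 by norm_num,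
      Real.pow_three_rpow_neg_two_thirds hr.le] at hcube
    intro x hx y hy
    rw [approx_of_ge hx, approx_of_ge hy, show 1 / (3 * r ^ 2) = 1 / 3 * (r ^ 2)⁻¹ by ring]
    exact hcube hx hy

theorem integral_tangent_energy (hr : 0 < r) :
    ∫ s in (0:ℝ)..3 * r ^ 3, ((s / (3 * r ^ 2)) ^ 3 - s) ^ 2 * (1 / (3 * r ^ 2)) ^ 6
      = 68 / (8505 * r ^ 3) := by
  have hG : ∀ x, HasDerivAt
      (fun s => s ^ 7 / (7 * 3 ^ 12 * r ^ 24) - 2 * s ^ 5 / (5 * 3 ^ 9 * r ^ 18)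
        + s ^ 3 / (3 * 3 ^ 6 * r ^ 12))
      (((x / (3 * r ^ 2)) ^ 3 - x) ^ 2 * (1 / (3 * r ^ 2)) ^ 6) x := fun x => by
    refine ((((hasDerivAt_pow 7 x).div_const (7 * 3 ^ 12 * r ^ 24)).sub
      (((hasDerivAt_pow 5 x).const_mul 2).div_const (5 * 3 ^ 9 * r ^ 18))).add
      ((hasDerivAt_pow 3 x).div_const (3 * 3 ^ 6 * r ^ 12))).congr_deriv ?_
    field_simp
    ring
  rw [intervalIntegral.integral_eq_sub_of_hasDerivAt (fun x _ => hG x)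
    ((by fun_prop : Continuous _).intervalIntegrable _ _)]
  field_simp
  ring

theorem le_integral_energy (hr : 0 < r) (hr₁ : 3 * r ^ 3 ≤ 1) :
    68 / (8505 * r ^ 3) ≤ ∫ s in (0:ℝ)..1, (approx r s ^ 3 - s) ^ 2 * approxDeriv r s ^ 6 := by
  have hs₀ : 0 ≤ 3 * r ^ 3 := by positivity
  have htangent : EqOn (fun s => (approx r s ^ 3 - s) ^ 2 * approxDeriv r s ^ 6)
      (fun s => ((s / (3 * r ^ 2)) ^ 3 - s) ^ 2 * (1 / (3 * r ^ 2)) ^ 6) (Iic (3 * r ^ 3)) :=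
    fun s hs => by simp only [approx_of_le hr hs, approxDeriv_of_le hr hs]
  have hcurve : EqOn (fun s => (approx r s ^ 3 - s) ^ 2 * approxDeriv r s ^ 6)
      (fun s => (((s - 2 * r ^ 3) ^ ((1:ℝ)/3)) ^ 3 - s) ^ 2
        * (1 / 3 * (s - 2 * r ^ 3) ^ (-(2:ℝ)/3)) ^ 6) (Ici (3 * r ^ 3)) :=
    fun s hs => by simp only [approx_of_ge hs, approxDeriv_of_ge hs]
  have hint₁ : IntervalIntegrable (fun s => (approx r s ^ 3 - s) ^ 2 * approxDeriv r s ^ 6)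
      volume 0 (3 * r ^ 3) :=
    ((by fun_prop : Continuous _).intervalIntegrable _ _).congr
      (htangent.mono (by rw [uIoc_of_le hs₀]; exact Ioc_subset_Iic_self)).symm
  have hint₂ : IntervalIntegrable (fun s => (approx r s ^ 3 - s) ^ 2 * approxDeriv r s ^ 6)
      volume (3 * r ^ 3) 1 := by
    refine ContinuousOn.intervalIntegrable_of_Icc hr₁
      (ContinuousOn.congr ?_ (hcurve.mono Icc_subset_Ici_self))
    have hsub : ContinuousOn (fun s : ℝ => s - 2 * r ^ 3) (Icc (3 * r ^ 3) 1) := by fun_prop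
    have hne : ∀ s ∈ Icc (3 * r ^ 3) 1, s - 2 * r ^ 3 ≠ 0 :=
      fun s hs => by nlinarith [hs.1, pow_pos hr 3]
    exact (((hsub.rpow_const fun s hs => Or.inl (hne s hs)).pow 3).sub continuousOn_id).pow 2
      |>.mul ((continuousOn_const.mul (hsub.rpow_const fun s hs => Or.inl (hne s hs))).pow 6)
  rw [← integral_tangent_energy hr, ← intervalIntegral.integral_congr
    (htangent.mono (by rw [uIcc_of_le hs₀]; exact Icc_subset_Iic_self))]
  exact intervalIntegral.integral_mono_interval le_rfl hs₀ hr₁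
    (Eventually.of_forall fun s => by positivity) (hint₁.trans hint₂)

noncomputable def distIntegrand (r s : ℝ) : ℝ :=
  |approx r s - s ^ ((1:ℝ)/3)| + |approxDeriv r s - s ^ (-(2:ℝ)/3) / 3|

theorem distIntegrand_of_le (hr : 0 < r) (hs : s ≤ 3 * r ^ 3) :
    distIntegrand r s
      = |s / (3 * r ^ 2) - s ^ ((1:ℝ)/3)| + |1 / (3 * r ^ 2) - s ^ (-(2:ℝ)/3) / 3| := by
  rw [distIntegrand, approx_of_le hr hs, approxDeriv_of_le hr hs]

theorem distIntegrand_of_ge (hr : 0 < r) (hs : 3 * r ^ 3 ≤ s) :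
    distIntegrand r s = (s ^ ((1:ℝ)/3) - (s - 2 * r ^ 3) ^ ((1:ℝ)/3))
      + (1 / 3 * (s - 2 * r ^ 3) ^ (-(2:ℝ)/3) - s ^ (-(2:ℝ)/3) / 3) := by
  have hs₁ : 0 < s - 2 * r ^ 3 := by nlinarith [pow_pos hr 3]
  rw [distIntegrand, approx_of_ge hs, approxDeriv_of_ge hs, abs_sub_comm,
    abs_of_nonneg (sub_nonneg.2
      (Real.rpow_le_rpow hs₁.le (by linarith [pow_pos hr 3]) (by norm_num))),
    abs_of_nonneg (sub_nonneg.2 ?_)]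
  rw [div_eq_inv_mul, ← one_div]
  exact mul_le_mul_of_nonneg_left
    (Real.rpow_le_rpow_of_nonpos hs₁ (by linarith [pow_pos hr 3]) (by norm_num)) (by norm_num)

theorem intervalIntegrable_distIntegrand_tangent (hr : 0 < r) :
    IntervalIntegrable (distIntegrand r) volume 0 (3 * r ^ 3) := by
  have h : IntervalIntegrable (fun s : ℝ => |s / (3 * r ^ 2) - s ^ ((1:ℝ)/3)|
      + |1 / (3 * r ^ 2) - s ^ (-(2:ℝ)/3) / 3|) volume 0 (3 * r ^ 3) :=
    (((continuous_id.div_const _).intervalIntegrable _ _).sub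
      (intervalIntegral.intervalIntegrable_rpow' (by norm_num))).abs.add
      (intervalIntegrable_const.sub
        ((intervalIntegral.intervalIntegrable_rpow' (by norm_num)).div_const 3)).abs
  refine h.congr fun s hs => ?_
  rw [uIoc_of_le (by positivity)] at hs
  exact (distIntegrand_of_le hr hs.2).symm

theorem integral_distIntegrand_tangent_le (hr : 0 < r) (hr₁ : 3 * r ^ 3 ≤ 1) :
    ∫ s in (0:ℝ)..3 * r ^ 3, distIntegrand r s ≤ 7 * r := by
  have hs₀ : 0 ≤ 3 * r ^ 3 := by positivity
  have hrpow : IntervalIntegrable (fun s : ℝ => s ^ (-(2:ℝ)/3)) volume 0 (3 * r ^ 3) :=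
    intervalIntegral.intervalIntegrable_rpow' (by norm_num)
  have hbound : ∀ s ∈ Icc 0 (3 * r ^ 3),
      distIntegrand r s ≤ 3 * r + (1 / (3 * r ^ 2) + s ^ (-(2:ℝ)/3) / 3) := by
    intro s hs
    rw [distIntegrand_of_le hr hs.2]
    have hlin : s / (3 * r ^ 2) ≤ 3 * r := by
      rw [div_le_iff₀ (by positivity)]
      nlinarith [hs.2, pow_pos hr 3]
    have hcbrt : s ^ ((1:ℝ)/3) ≤ 3 * r :=
      Real.rpow_one_third_le hs.1 (by positivity) (by nlinarith [hs.2, pow_pos hr 3])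
    have hpow : 0 ≤ s ^ (-(2:ℝ)/3) / 3 := by have := hs.1; positivity
    have := abs_sub_le_of_nonneg_of_le (by have := hs.1; positivity) hlin
      (Real.rpow_nonneg hs.1 _) hcbrt
    have := abs_sub_le_of_nonneg_of_le (by positivity : 0 ≤ 1 / (3 * r ^ 2))
      (le_add_of_nonneg_right hpow) hpow
      (le_add_of_nonneg_left (by positivity : 0 ≤ 1 / (3 * r ^ 2)))
    linarith
  refine (intervalIntegral.integral_mono_on hs₀ (intervalIntegrable_distIntegrand_tangent hr)
    (intervalIntegrable_const.add (intervalIntegrable_const.add (hrpow.div_const 3)))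
    hbound).trans ?_
  rw [intervalIntegral.integral_add intervalIntegrable_const
      (intervalIntegrable_const.add (hrpow.div_const 3)),
    intervalIntegral.integral_add intervalIntegrable_const (hrpow.div_const 3),
    intervalIntegral.integral_const, intervalIntegral.integral_const,
    intervalIntegral.integral_div, integral_rpow (Or.inl (by norm_num)),
    Real.zero_rpow (by norm_num)]
  have hcbrt : (3 * r ^ 3) ^ ((1:ℝ)/3) ≤ 3 * r :=
    Real.rpow_one_third_le hs₀ (by positivity) (by nlinarith [pow_pos hr 3])
  have hexp : -(2:ℝ)/3 + 1 = 1/3 := by norm_num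
  have hlin : 3 * r ^ 3 * (1 / (3 * r ^ 2)) = r := by field_simp
  simp only [sub_zero, smul_eq_mul, hexp, hlin]
  nlinarith [mul_le_mul_of_nonneg_left hr₁ (by positivity : (0:ℝ) ≤ 3 * r)]

theorem intervalIntegrable_distIntegrand_curve (hr : 0 < r) (hr₁ : 3 * r ^ 3 ≤ 1) :
    IntervalIntegrable (distIntegrand r) volume (3 * r ^ 3) 1 := by
  have hr₃ : 0 < r ^ 3 := pow_pos hr 3
  have hne : ∀ s ∈ Icc (3 * r ^ 3) 1, s - 2 * r ^ 3 ≠ 0 := fun s hs => by linarith [hs.1]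
  have hne' : ∀ s ∈ Icc (3 * r ^ 3) 1, s ≠ 0 := fun s hs => by linarith [hs.1]
  have hsub : ContinuousOn (fun s : ℝ => s - 2 * r ^ 3) (Icc (3 * r ^ 3) 1) := by fun_prop
  refine ContinuousOn.intervalIntegrable_of_Icc hr₁
    (ContinuousOn.congr ?_ fun s hs => distIntegrand_of_ge hr hs.1)
  exact ((continuousOn_id.rpow_const fun s hs => Or.inl (hne' s hs)).sub
    (hsub.rpow_const fun s hs => Or.inl (hne s hs))).add
    ((continuousOn_const.mul (hsub.rpow_const fun s hs => Or.inl (hne s hs))).sub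
      ((continuousOn_id.rpow_const fun s hs => Or.inl (hne' s hs)).div_const 3))

theorem integral_distIntegrand_curve_le (hr : 0 < r) (hr₁ : 3 * r ^ 3 ≤ 1) :
    ∫ s in 3 * r ^ 3..1, distIntegrand r s ≤ 4 * r := by
  have hr₃ : 0 < r ^ 3 := pow_pos hr 3
  set F' : ℝ → ℝ := fun s => 1 / 3 * (s - 2 * r ^ 3) ^ (-(2:ℝ)/3) - s ^ (-(2:ℝ)/3) / 3
  have hF : ∀ x ∈ uIcc (3 * r ^ 3) 1,
      HasDerivAt (fun s => (s - 2 * r ^ 3) ^ ((1:ℝ)/3) - s ^ ((1:ℝ)/3)) (F' x) x := by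
    intro x hx
    rw [uIcc_of_le hr₁] at hx
    have hxa : x - 2 * r ^ 3 ≠ 0 := by linarith [hx.1]
    have hx0 : x ≠ 0 := by linarith [hx.1]
    refine ((((hasDerivAt_id x).sub_const _).rpow_const (p := (1:ℝ)/3) (Or.inl hxa)).sub
      (Real.hasDerivAt_rpow_const (Or.inl hx0))).congr_deriv ?_
    norm_num [F']
    ring
  have hF'int : IntervalIntegrable F' volume (3 * r ^ 3) 1 := by
    refine ContinuousOn.intervalIntegrable_of_Icc hr₁ ?_
    have hne : ∀ s ∈ Icc (3 * r ^ 3) 1, s - 2 * r ^ 3 ≠ 0 := fun s hs => by linarith [hs.1]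
    have hne' : ∀ s ∈ Icc (3 * r ^ 3) 1, s ≠ 0 := fun s hs => by linarith [hs.1]
    exact (continuousOn_const.mul ((continuousOn_id.sub continuousOn_const).rpow_const
      fun s hs => Or.inl (hne s hs))).sub
      ((continuousOn_id.rpow_const fun s hs => Or.inl (hne' s hs)).div_const 3)
  have hbound : ∀ s ∈ Icc (3 * r ^ 3) 1, distIntegrand r s ≤ 2 * r + F' s := by
    intro s hs
    have hsa : 0 ≤ s - 2 * r ^ 3 := by linarith [hs.1]
    rw [distIntegrand_of_ge hr hs.1]
    have hsub : s ^ ((1:ℝ)/3) ≤ (s - 2 * r ^ 3) ^ ((1:ℝ)/3) + (2 * r ^ 3) ^ ((1:ℝ)/3) := by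
      simpa using Real.rpow_add_le_add_rpow hsa (by positivity : (0:ℝ) ≤ 2 * r ^ 3)
        (by norm_num : (0:ℝ) ≤ 1/3) (by norm_num)
    have hcbrt : (2 * r ^ 3) ^ ((1:ℝ)/3) ≤ 2 * r :=
      Real.rpow_one_third_le (by positivity) (by positivity) (by nlinarith)
    simp only [F']
    linarith
  calc ∫ s in 3 * r ^ 3..1, distIntegrand r s
      ≤ ∫ s in 3 * r ^ 3..1, (2 * r + F' s) :=
        intervalIntegral.integral_mono_on hr₁ (intervalIntegrable_distIntegrand_curve hr hr₁)
          (intervalIntegrable_const.add hF'int) hbound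
    _ = 2 * r * (1 - 3 * r ^ 3) + ((1 - 2 * r ^ 3) ^ ((1:ℝ)/3) - 1 ^ ((1:ℝ)/3)
          - ((3 * r ^ 3 - 2 * r ^ 3) ^ ((1:ℝ)/3) - (3 * r ^ 3) ^ ((1:ℝ)/3))) := by
        rw [intervalIntegral.integral_add intervalIntegrable_const hF'int,
          intervalIntegral.integral_const, smul_eq_mul,
          intervalIntegral.integral_eq_sub_of_hasDerivAt hF hF'int]
        ring
    _ ≤ 4 * r := by
        have h1 : (1 - 2 * r ^ 3) ^ ((1:ℝ)/3) ≤ 1 :=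
          Real.rpow_le_one (by linarith) (by linarith) (by norm_num)
        have h2 : (3 * r ^ 3) ^ ((1:ℝ)/3) ≤ 3 * r :=
          Real.rpow_one_third_le (by positivity) (by positivity) (by nlinarith)
        rw [Real.one_rpow, show 3 * r ^ 3 - 2 * r ^ 3 = r ^ 3 by ring,
          Real.pow_three_rpow_one_third hr.le]
        nlinarith

theorem integral_distIntegrand_le (hr : 0 < r) (hr₁ : 3 * r ^ 3 ≤ 1) :
    ∫ s in (0:ℝ)..1, distIntegrand r s ≤ 11 * r := by
  rw [← intervalIntegral.integral_add_adjacent_intervals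
    (intervalIntegrable_distIntegrand_tangent hr) (intervalIntegrable_distIntegrand_curve hr hr₁)]
  linarith [integral_distIntegrand_tangent_le hr hr₁, integral_distIntegrand_curve_le hr hr₁]

noncomputable def radius (ν : ℝ) : ℝ := (√(3 * ν))⁻¹

variable {ν : ℝ}

theorem radius_pos (hν : 0 < ν) : 0 < radius ν := by
  unfold radius
  positivity

theorem one_div_three_mul_radius_sq (hν : 0 ≤ ν) : 1 / (3 * radius ν ^ 2) = ν := by
  rw [radius, inv_pow, Real.sq_sqrt (by positivity)]
  field_simp

theorem radius_pow_three (hν : 0 ≤ ν) : radius ν ^ 3 = 1 / (3 * √3 * ν ^ ((3:ℝ)/2)) := by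
  have h3 : 3 * √3 = √3 ^ 3 := by rw [pow_succ, Real.sq_sqrt (by norm_num)]
  have hν₃ : ν ^ ((3:ℝ)/2) = √ν ^ 3 := by
    rw [Real.sqrt_eq_rpow, ← Real.rpow_natCast, ← Real.rpow_mul hν]
    norm_num
  rw [radius, h3, hν₃, ← mul_pow, ← Real.sqrt_mul (by norm_num), inv_pow, one_div]

theorem three_mul_radius_pow_three_le_one (hν : 1 ≤ ν) : 3 * radius ν ^ 3 ≤ 1 := by
  have hr := radius_pos (by linarith : 0 < ν)
  have hsq : 3 * radius ν ^ 2 ≤ 1 := by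
    have h := one_div_three_mul_radius_sq (by linarith : 0 ≤ ν)
    rw [← h, le_div_iff₀ (by positivity)] at hν
    linarith
  nlinarith

theorem tendsto_radius_atTop : Tendsto radius atTop (𝓝 0) :=
  tendsto_inv_atTop_zero.comp
    (Real.tendsto_sqrt_atTop.comp (tendsto_id.const_mul_atTop (by norm_num : (0:ℝ) < 3)))

theorem approx_radius (hν : 0 < ν) (s : ℝ) :
    approx (radius ν) s = if s < 1 / (√3 * ν ^ ((3:ℝ)/2)) then ν * s
      else (s - 2 / (3 * √3 * ν ^ ((3:ℝ)/2))) ^ ((1:ℝ)/3) := by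
  have h₃ : 3 * radius ν ^ 3 = 1 / (√3 * ν ^ ((3:ℝ)/2)) := by
    rw [radius_pow_three hν.le]; ring
  have h₂ : 2 * radius ν ^ 3 = 2 / (3 * √3 * ν ^ ((3:ℝ)/2)) := by
    rw [radius_pow_three hν.le]; ring
  rw [approx, div_eq_mul_one_div s, one_div_three_mul_radius_sq hν.le, mul_comm s, h₃, h₂]

theorem approxDeriv_radius (hν : 0 < ν) (s : ℝ) :
    approxDeriv (radius ν) s = if s < 1 / (√3 * ν ^ ((3:ℝ)/2)) then ν
      else 1 / 3 * (s - 2 / (3 * √3 * ν ^ ((3:ℝ)/2))) ^ (-(2:ℝ)/3) := by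
  have h₃ : 3 * radius ν ^ 3 = 1 / (√3 * ν ^ ((3:ℝ)/2)) := by
    rw [radius_pow_three hν.le]; ring
  have h₂ : 2 * radius ν ^ 3 = 2 / (3 * √3 * ν ^ ((3:ℝ)/2)) := by
    rw [radius_pow_three hν.le]; ring
  rw [approxDeriv, one_div_three_mul_radius_sq hν.le, h₃, h₂]

theorem energy_bound_eq (hν : 0 ≤ ν) :
    68 / (945 * √3) * ν ^ ((3:ℝ)/2) = 68 / (8505 * radius ν ^ 3) := by
  rw [radius_pow_three hν]
  field_simp
  rw [Real.sq_sqrt (by norm_num)]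
  ring

end Mania

open Mania in
/-- In Manià's example, the reparametrized functions
`y_ν(s) = νs` on `[0, 1/(√3 ν^{3/2}))`, `y_ν(s) = (s − 2/(3√3 ν^{3/2}))^{1/3}`
elsewhere, are Lipschitz with constant `ν`, satisfy `y_ν(0) = 0`, converge to
`y(s) = s^{1/3}` in `W^{1,1}([0,1])`, yet
`F(y_ν) ≥ (68/(945√3))·ν^{3/2} → +∞`. -/
theorem stmt16 (Y Yd : ℝ → ℝ → ℝ)
    (hY : ∀ ν s : ℝ, Y ν s =
      if s < 1 / (Real.sqrt 3 * ν ^ ((3:ℝ)/2)) then ν * s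
      else (s - 2 / (3 * Real.sqrt 3 * ν ^ ((3:ℝ)/2))) ^ ((1:ℝ)/3))
    (hYd : ∀ ν s : ℝ, Yd ν s =
      if s < 1 / (Real.sqrt 3 * ν ^ ((3:ℝ)/2)) then ν
      else (1/3) * (s - 2 / (3 * Real.sqrt 3 * ν ^ ((3:ℝ)/2))) ^ (-(2:ℝ)/3)) :
    (∀ ν : ℝ, 2 ≤ ν →
      LipschitzOnWith (Real.toNNReal ν) (Y ν) (Icc (0:ℝ) 1) ∧
      Y ν 0 = 0 ∧
      (68 / (945 * Real.sqrt 3)) * ν ^ ((3:ℝ)/2) ≤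
        ∫ s in (0:ℝ)..1, ((Y ν s) ^ 3 - s) ^ 2 * (Yd ν s) ^ 6) ∧
    Tendsto (fun ν : ℝ =>
        ∫ s in (0:ℝ)..1,
          (|Y ν s - s ^ ((1:ℝ)/3)| + |Yd ν s - s ^ (-(2:ℝ)/3) / 3|))
      atTop (nhds 0) ∧
    Tendsto (fun ν : ℝ =>
        ∫ s in (0:ℝ)..1, ((Y ν s) ^ 3 - s) ^ 2 * (Yd ν s) ^ 6)
      atTop atTop := by
  have hY_eq : ∀ ν, 0 < ν → Y ν = approx (radius ν) := fun ν hν =>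
    funext fun s => (hY ν s).trans (approx_radius hν s).symm
  have hYd_eq : ∀ ν, 0 < ν → Yd ν = approxDeriv (radius ν) := fun ν hν =>
    funext fun s => (hYd ν s).trans (approxDeriv_radius hν s).symm
  have henergy : ∀ ν : ℝ, 2 ≤ ν → (68 / (945 * Real.sqrt 3)) * ν ^ ((3:ℝ)/2) ≤
      ∫ s in (0:ℝ)..1, ((Y ν s) ^ 3 - s) ^ 2 * (Yd ν s) ^ 6 := fun ν hν => by
    have hν₀ : 0 < ν := by linarith
    rw [hY_eq ν hν₀, hYd_eq ν hν₀, energy_bound_eq hν₀.le]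
    exact le_integral_energy (radius_pos hν₀) (three_mul_radius_pow_three_le_one (by linarith))
  refine ⟨fun ν hν => ⟨?_, ?_, henergy ν hν⟩, ?_, ?_⟩
  · have hν₀ : 0 < ν := by linarith
    have h := (lipschitzOnWith_approx (radius_pos hν₀)).mono
      (Icc_subset_Ici_self : Icc (0:ℝ) 1 ⊆ Ici 0)
    rwa [one_div_three_mul_radius_sq hν₀.le, ← hY_eq ν hν₀] at h
  · rw [hY_eq ν (by linarith)]
    exact approx_zero (radius_pos (by linarith))
  · refine squeeze_zero' (Eventually.of_forall fun ν =>
      intervalIntegral.integral_nonneg zero_le_one fun s _ => by positivity) ?_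
      (by simpa using tendsto_radius_atTop.const_mul 11)
    filter_upwards [eventually_ge_atTop 2] with ν hν
    have hν₀ : 0 < ν := by linarith
    rw [hY_eq ν hν₀, hYd_eq ν hν₀]
    exact integral_distIntegrand_le (radius_pos hν₀)
      (three_mul_radius_pow_three_le_one (by linarith))
  · exact tendsto_atTop_mono' atTop ((eventually_ge_atTop 2).mono henergy)
      ((tendsto_rpow_atTop (by norm_num)).const_mul_atTop (by positivity))
end

section
/- Let q(z) = 1/(2(1−z)) and y(s) = 1 − √(1−s) on [0,1]. For ν large, let t_ν ∈ (0,1) satisfy y'(t_ν) = ν, i.e. t_ν = 1 − 1/(4ν²). Define φ_ν(1) = 1, φ_ν'(τ) = y'(τ)/ν on [t_ν,1] and 1 elsewhere, so φ_ν(τ) = 1 + (y(τ)−1)/ν on [t_ν,1] and φ_ν(τ) = φ_ν(t_ν) + τ − t_ν on [0,t_ν]. Then φ_ν(0) ≤ 0, φ_ν is strictly increasing, and the function y_ν(s) := 1 + ν(s−1) on [φ_ν(t_ν), 1] and y_ν(s) := y(s + t_ν − φ_ν(t_ν)) on [0, φ_ν(t_ν)] is Lipschitz with y_ν(1) = 1,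 satisfies y_ν'(s) ≤ q(y_ν(s)) a.e., and y_ν → y in W^{1,1}([0,1]) as ν → +∞. -/
/-!
With `t = t_ν` and `c = φ_ν(t_ν)` one computes `√(1 - t) = 1/(2ν)`, `c = 1 - 1/(2ν²)` and
`t - c = 1 - t`. On `[t, 1]` the map `φ_ν` is `y` rescaled by `1/ν`, so `y_ν = y ∘ φ_ν⁻¹` is the
tangent line to `y` at `t` (slope `y'(t) = ν`) after `c`, and the translate `y(· + t - c)` before
it. The two pieces meet with the same value and slope, so `y_ν` is differentiable with `0 ≤ y_ν' ≤ ν`. Before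
`c` the differential inclusion `y_ν' ≤ q(y_ν)` holds with equality, after `c` it reads
`2ν²(1 - s) ≤ 1`.

For the `W^{1,1}` estimate, `|y_ν - y| ≤ 1/ν` pointwise, and since `y_ν' ≥ y'` before `c`,
`∫₀¹ |y_ν' - y'| ≤ ∫₀¹ (y_ν' - y') + 2 ∫_c^1 y' = -y_ν(0) + 2√(1 - c) ≤ 2/ν`.
-/

open MeasureTheory Set Filter Topology

theorem hasDerivAt_ite_le {f g f' g' : ℝ → ℝ} {a : ℝ}
    (hf : ∀ x ≤ a, HasDerivAt f (f' x) x) (hg : ∀ x ≥ a, HasDerivAt g (g' x) x)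
    (hfg : f a = g a) (hfg' : f' a = g' a) (x : ℝ) :
    HasDerivAt (fun s => if s ≤ a then f s else g s) (if x ≤ a then f' x else g' x) x := by
  rcases lt_trichotomy x a with hx | rfl | hx
  · rw [if_pos hx.le]
    refine (hf x hx.le).congr_of_eventuallyEq ?_
    filter_upwards [Iio_mem_nhds hx] with s hs
    rw [if_pos (le_of_lt hs)]
  · rw [if_pos le_rfl]
    have hL : HasDerivWithinAt (fun s => if s ≤ x then f s else g s) (f' x) (Iic x) x :=
      (hf x le_rfl).hasDerivWithinAt.congr (fun s hs => if_pos hs) (if_pos le_rfl)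
    have hR : HasDerivWithinAt (fun s => if s ≤ x then f s else g s) (f' x) (Ici x) x := by
      rw [hfg']
      refine (hg x le_rfl).hasDerivWithinAt.congr (fun s hs => ?_) (by rw [if_pos le_rfl, hfg])
      rcases (mem_Ici.1 hs).eq_or_lt with rfl | hs
      · rw [if_pos le_rfl, hfg]
      · rw [if_neg (not_le.2 hs)]
    rw [← hasDerivWithinAt_univ, ← Iic_union_Ici]
    exact hL.union hR
  · rw [if_neg (not_le.2 hx)]
    refine (hg x hx.le).congr_of_eventuallyEq ?_
    filter_upwards [Ioi_mem_nhds hx] with s hs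
    rw [if_neg (not_le.2 hs)]

namespace Alberti

/- In the notation of the paper: `profile = y`, `threshold ν = t_ν`, `junction ν = φ_ν(t_ν)`,
`reparam ν = φ_ν`, `approx ν = y_ν` and `approxDeriv ν = y_ν'`. -/

noncomputable def profile (s : ℝ) : ℝ := 1 - Real.sqrt (1 - s)

noncomputable def profileDeriv (s : ℝ) : ℝ := 1 / (2 * Real.sqrt (1 - s))

noncomputable def threshold (ν : ℝ) : ℝ := 1 - 1 / (4 * ν ^ 2)

noncomputable def junction (ν : ℝ) : ℝ := 1 + (profile (threshold ν) - 1) / ν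

noncomputable def reparam (ν τ : ℝ) : ℝ :=
  if τ ≤ threshold ν then junction ν + τ - threshold ν else 1 + (profile τ - 1) / ν

noncomputable def approx (ν s : ℝ) : ℝ :=
  if s ≤ junction ν then profile (s + threshold ν - junction ν) else 1 + ν * (s - 1)

noncomputable def approxDeriv (ν s : ℝ) : ℝ :=
  if s ≤ junction ν then profileDeriv (s + threshold ν - junction ν) else ν

theorem continuous_profile : Continuous profile :=
  continuous_const.sub (Real.continuous_sqrt.comp (continuous_const.sub continuous_id))

theorem hasDerivAt_profile {x : ℝ} (hx : x < 1) : HasDerivAt profile (profileDeriv x) x := by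
  have h := (((hasDerivAt_id' x).const_sub 1).sqrt (sub_pos.2 hx).ne').const_sub 1
  unfold profile profileDeriv
  exact h.congr_deriv (by ring)

theorem strictMonoOn_profile : StrictMonoOn profile (Iic 1) := fun a ha b hb hab => by
  unfold profile
  have := Real.sqrt_lt_sqrt (sub_nonneg.2 (mem_Iic.1 hb)) (sub_lt_sub_left hab 1)
  linarith

theorem profile_nonneg {s : ℝ} (hs : 0 ≤ s) : 0 ≤ profile s :=
  sub_nonneg.2 (Real.sqrt_le_one.2 (by linarith))

theorem profile_add_sub_profile_le {s h : ℝ} (hh : 0 ≤ h) (hs : s + h ≤ 1) :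
    profile (s + h) - profile s ≤ Real.sqrt h := by
  have ha : 0 ≤ 1 - (s + h) := by linarith
  have hsq : Real.sqrt (1 - s) ≤ Real.sqrt (1 - (s + h)) + Real.sqrt h := by
    rw [Real.sqrt_le_left (by positivity)]
    nlinarith [Real.sq_sqrt ha, Real.sq_sqrt hh,
      mul_nonneg (Real.sqrt_nonneg (1 - (s + h))) (Real.sqrt_nonneg h)]
  simp only [profile]
  linarith

theorem profileDeriv_nonneg (s : ℝ) : 0 ≤ profileDeriv s := by
  unfold profileDeriv; positivity

theorem profileDeriv_le_profileDeriv {a b : ℝ} (hab : a ≤ b) (hb : b < 1) :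
    profileDeriv a ≤ profileDeriv b := by
  unfold profileDeriv
  gcongr

theorem one_sub_profile (s : ℝ) : 1 - profile s = Real.sqrt (1 - s) := by
  simp [profile]

theorem profileDeriv_eq (s : ℝ) : profileDeriv s = 1 / (2 * (1 - profile s)) := by
  rw [one_sub_profile, profileDeriv]

theorem intervalIntegrable_profileDeriv {a b : ℝ} (hab : a ≤ b) (hb : b ≤ 1) :
    IntervalIntegrable profileDeriv volume a b :=
  (intervalIntegrable_iff_integrableOn_Ioc_of_le hab).2 <|
    intervalIntegral.integrableOn_deriv_of_nonneg continuous_profile.continuousOn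
      (fun _ hx => hasDerivAt_profile (hx.2.trans_le hb)) fun x _ => profileDeriv_nonneg x

theorem integral_profileDeriv {a b : ℝ} (hab : a ≤ b) (hb : b ≤ 1) :
    ∫ s in a..b, profileDeriv s = profile b - profile a :=
  intervalIntegral.integral_eq_sub_of_hasDerivAt_of_le hab continuous_profile.continuousOn
    (fun _ hx => hasDerivAt_profile (hx.2.trans_le hb)) (intervalIntegrable_profileDeriv hab hb)

section
variable {ν : ℝ}

theorem one_sub_threshold : 1 - threshold ν = 1 / (4 * ν ^ 2) := by
  rw [threshold, sub_sub_cancel]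

theorem threshold_lt_one (hν : 0 < ν) : threshold ν < 1 := by
  have : 0 < 1 / (4 * ν ^ 2) := by positivity
  linarith [one_sub_threshold (ν := ν)]

theorem sqrt_one_sub_threshold (hν : 0 < ν) : Real.sqrt (1 - threshold ν) = 1 / (2 * ν) := by
  rw [one_sub_threshold, show 1 / (4 * ν ^ 2) = (1 / (2 * ν)) ^ 2 by ring]
  exact Real.sqrt_sq (by positivity)

theorem profileDeriv_threshold (hν : 0 < ν) : profileDeriv (threshold ν) = ν := by
  rw [profileDeriv, sqrt_one_sub_threshold hν]
  field_simp

theorem profile_threshold (hν : 0 < ν) : profile (threshold ν) = 1 + ν * (junction ν - 1) := by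
  rw [junction]
  field_simp
  ring

theorem junction_eq (hν : 0 < ν) : junction ν = 1 - 1 / (2 * ν ^ 2) := by
  rw [junction, profile, sqrt_one_sub_threshold hν]
  field_simp
  ring

theorem threshold_sub_junction (hν : 0 < ν) : threshold ν - junction ν = 1 - threshold ν := by
  rw [junction_eq hν, threshold]
  field_simp
  ring

theorem junction_lt_threshold (hν : 0 < ν) : junction ν < threshold ν := by
  linarith [threshold_sub_junction hν, threshold_lt_one hν]

theorem junction_nonneg (hν : 1 ≤ ν) : 0 ≤ junction ν := by
  rw [junction_eq (by linarith), sub_nonneg, div_le_one (by positivity)]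
  nlinarith

theorem reparam_zero_nonpos (hν : 1 ≤ ν) : reparam ν 0 ≤ 0 := by
  have := junction_lt_threshold (zero_lt_one.trans_le hν)
  rw [reparam, if_pos ((junction_nonneg hν).trans this.le)]
  linarith

theorem strictMonoOn_reparam (hν : 0 < ν) : StrictMonoOn (reparam ν) (Iic 1) := by
  have hlow : StrictMonoOn (reparam ν) (Iic (threshold ν)) := fun a ha b hb hab => by
    rw [reparam, reparam, if_pos (mem_Iic.1 ha), if_pos (mem_Iic.1 hb)]
    linarith
  have hhigh : StrictMonoOn (reparam ν) (Icc (threshold ν) 1) := by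
    have hEq : EqOn (reparam ν) (fun τ => 1 + (profile τ - 1) / ν) (Icc (threshold ν) 1) := by
      intro τ hτ
      rcases hτ.1.eq_or_lt with rfl | hlt
      · rw [reparam, if_pos le_rfl, junction]
        ring
      · rw [reparam, if_neg (not_le.2 hlt)]
    refine StrictMonoOn.congr (fun a ha b hb hab => ?_) hEq.symm
    have hprofile := strictMonoOn_profile (mem_Iic.2 ha.2) (mem_Iic.2 hb.2) hab
    gcongr
  have := hlow.union hhigh isGreatest_Iic (isLeast_Icc (threshold_lt_one hν).le)
  rwa [Iic_union_Icc_eq_Iic (threshold_lt_one hν).le] at this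

theorem sqrt_one_sub_junction_le (hν : 0 < ν) : Real.sqrt (1 - junction ν) ≤ 1 / ν := by
  rw [junction_eq hν, sub_sub_cancel, Real.sqrt_le_left (by positivity), div_pow, one_pow]
  gcongr
  linarith [pow_pos hν 2]

theorem hasDerivAt_approx (hν : 0 < ν) (x : ℝ) : HasDerivAt (approx ν) (approxDeriv ν x) x := by
  refine hasDerivAt_ite_le (f := fun s => profile (s + threshold ν - junction ν))
    (g := fun s => 1 + ν * (s - 1)) (f' := fun s => profileDeriv (s + threshold ν - junction ν))
    (g' := fun _ => ν) (fun x hx => ?_) (fun x _ => ?_) ?_ ?_ x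
  · have hx1 : x + threshold ν - junction ν < 1 := by linarith [threshold_lt_one hν]
    simp only [add_sub_assoc] at hx1 ⊢
    exact HasDerivAt.comp_add_const x _ (hasDerivAt_profile hx1)
  · simpa using (((hasDerivAt_id' x).sub_const 1).const_mul ν).const_add 1
  · simp only [add_sub_cancel_left, profile_threshold hν]
  · simp only [add_sub_cancel_left, profileDeriv_threshold hν]

theorem approxDeriv_nonneg (hν : 0 < ν) (s : ℝ) : 0 ≤ approxDeriv ν s := by
  rw [approxDeriv]
  split_ifs
  exacts [profileDeriv_nonneg _, hν.le]

theorem approxDeriv_le (hν : 0 < ν) (s : ℝ) : approxDeriv ν s ≤ ν := by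
  rw [approxDeriv]
  split_ifs with hs
  · calc profileDeriv (s + threshold ν - junction ν)
        ≤ profileDeriv (threshold ν) :=
          profileDeriv_le_profileDeriv (by linarith) (threshold_lt_one hν)
      _ = ν := profileDeriv_threshold hν
  · exact le_rfl

theorem lipschitzWith_approx (hν : 0 < ν) : LipschitzWith (Real.toNNReal ν) (approx ν) := by
  refine lipschitzOnWith_univ.1 <| convex_univ.lipschitzOnWith_of_nnnorm_hasDerivWithin_le
    (fun x _ => (hasDerivAt_approx hν x).hasDerivWithinAt) fun x _ => ?_
  rw [← NNReal.coe_le_coe, coe_nnnorm, Real.coe_toNNReal _ hν.le,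
    Real.norm_of_nonneg (approxDeriv_nonneg hν x)]
  exact approxDeriv_le hν x

theorem intervalIntegrable_approxDeriv (hν : 0 < ν) (a b : ℝ) :
    IntervalIntegrable (approxDeriv ν) volume a b :=
  intervalIntegral.intervalIntegrable_deriv_of_nonneg
    (lipschitzWith_approx hν).continuous.continuousOn (fun x _ => hasDerivAt_approx hν x)
    fun x _ => approxDeriv_nonneg hν x

theorem approx_one (hν : 0 < ν) : approx ν 1 = 1 := by
  rw [approx, if_neg (not_le.2 ((junction_lt_threshold hν).trans (threshold_lt_one hν)))]
  ring

theorem approxDeriv_le_of_lt_one (hν : 0 < ν) {s : ℝ} (hs : s < 1) :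
    approxDeriv ν s ≤ 1 / (2 * (1 - approx ν s)) := by
  rw [approxDeriv, approx]
  split_ifs with hj
  · exact (profileDeriv_eq _).le
  · have h : (1 - s) * (2 * ν ^ 2) < 1 := by
      rw [← lt_div_iff₀ (by positivity)]
      linarith [junction_eq hν]
    rw [le_div_iff₀ (by nlinarith)]
    nlinarith

theorem ae_approxDeriv_le (hν : 0 < ν) :
    ∀ᵐ s ∂(volume.restrict (Icc (0:ℝ) 1)), approxDeriv ν s ≤ 1 / (2 * (1 - approx ν s)) := by
  rw [← Measure.restrict_congr_set Ico_ae_eq_Icc]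
  filter_upwards [ae_restrict_mem measurableSet_Ico] with s hs
  exact approxDeriv_le_of_lt_one hν hs.2

theorem abs_approx_sub_profile_le (hν : 0 < ν) {s : ℝ} (hs : s ≤ 1) :
    |approx ν s - profile s| ≤ 1 / ν := by
  rw [approx]
  split_ifs with hj
  · have hshift : Real.sqrt (threshold ν - junction ν) = 1 / (2 * ν) := by
      rw [threshold_sub_junction hν, sqrt_one_sub_threshold hν]
    have hle : s + (threshold ν - junction ν) ≤ 1 := by linarith [threshold_lt_one hν]
    have hlow := strictMonoOn_profile.monotoneOn (mem_Iic.2 hs) (mem_Iic.2 hle)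
      (le_add_of_nonneg_right (sub_nonneg.2 (junction_lt_threshold hν).le))
    have hup := profile_add_sub_profile_le (sub_nonneg.2 (junction_lt_threshold hν).le) hle
    rw [hshift] at hup
    rw [add_sub_assoc, abs_of_nonneg (sub_nonneg.2 hlow)]
    calc _ ≤ 1 / (2 * ν) := hup
      _ ≤ 1 / ν := by gcongr; linarith
  · have hsqrt : Real.sqrt (1 - s) ≤ 1 / ν :=
      (Real.sqrt_le_sqrt (by linarith)).trans (sqrt_one_sub_junction_le hν)
    have hlin : ν * (1 - s) ≤ 1 / ν := by
      have h : 1 - s ≤ 1 / (2 * ν ^ 2) := by linarith [junction_eq hν]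
      calc ν * (1 - s) ≤ ν * (1 / (2 * ν ^ 2)) := by gcongr
        _ ≤ 1 / ν := by
          rw [show ν * (1 / (2 * ν ^ 2)) = 1 / (2 * ν) by field_simp]
          gcongr; linarith
    rw [profile, show 1 + ν * (s - 1) - (1 - Real.sqrt (1 - s)) =
      Real.sqrt (1 - s) - ν * (1 - s) by ring]
    exact abs_sub_le_of_nonneg_of_le (Real.sqrt_nonneg _) hsqrt
      (mul_nonneg hν.le (by linarith)) hlin

theorem abs_approxDeriv_sub_profileDeriv_le (hν : 0 < ν) (s : ℝ) :
    |approxDeriv ν s - profileDeriv s| ≤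
      approxDeriv ν s - profileDeriv s + 2 * (Ioi (junction ν)).indicator profileDeriv s := by
  have hp := profileDeriv_nonneg s
  rw [approxDeriv]
  split_ifs with hj
  · rw [indicator_of_notMem (show s ∉ Ioi (junction ν) from not_lt.2 hj), mul_zero, add_zero]
    refine (abs_of_nonneg (sub_nonneg.2 (profileDeriv_le_profileDeriv ?_ ?_))).le
    · linarith [junction_lt_threshold hν]
    · linarith [threshold_lt_one hν]
  · rw [indicator_of_mem (show s ∈ Ioi (junction ν) from not_le.1 hj)]
    exact abs_sub_le_iff.2 ⟨by linarith, by linarith⟩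

theorem integral_abs_approxDeriv_sub_profileDeriv_le (hν : 1 ≤ ν) :
    ∫ s in (0:ℝ)..1, |approxDeriv ν s - profileDeriv s| ≤ 2 / ν := by
  have hν0 : 0 < ν := zero_lt_one.trans_le hν
  have hj0 := junction_nonneg hν
  have hj1 := ((junction_lt_threshold hν0).trans (threshold_lt_one hν0)).le
  have hp := intervalIntegrable_profileDeriv zero_le_one le_rfl
  have hA := intervalIntegrable_approxDeriv hν0 0 1
  have hA_eq : ∫ s in (0:ℝ)..1, approxDeriv ν s = approx ν 1 - approx ν 0 :=
    intervalIntegral.integral_eq_sub_of_hasDerivAt (fun x _ => hasDerivAt_approx hν0 x) hA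
  have hind : IntervalIntegrable ((Ioi (junction ν)).indicator profileDeriv) volume 0 1 :=
    (intervalIntegrable_iff_integrableOn_Ioc_of_le zero_le_one).2 <|
      ((intervalIntegrable_iff_integrableOn_Ioc_of_le zero_le_one).1 hp).indicator
        measurableSet_Ioi
  have hind_eq : ∫ s in (0:ℝ)..1, (Ioi (junction ν)).indicator profileDeriv s =
      ∫ s in junction ν..1, profileDeriv s := by
    rw [intervalIntegral.integral_of_le zero_le_one, intervalIntegral.integral_of_le hj1,
      setIntegral_indicator measurableSet_Ioi, Ioc_inter_Ioi, max_eq_right hj0]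
  have happrox0 : 0 ≤ approx ν 0 := by
    rw [approx, if_pos hj0]
    exact profile_nonneg (by linarith [junction_lt_threshold hν0])
  have hprofile : profile 1 - profile (junction ν) ≤ 1 / ν := by
    simpa [profile] using sqrt_one_sub_junction_le hν0
  calc ∫ s in (0:ℝ)..1, |approxDeriv ν s - profileDeriv s|
      ≤ ∫ s in (0:ℝ)..1, (approxDeriv ν s - profileDeriv s +
          2 * (Ioi (junction ν)).indicator profileDeriv s) :=
        intervalIntegral.integral_mono_on zero_le_one (hA.sub hp).abs
          ((hA.sub hp).add (hind.const_mul 2))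
          fun s _ => abs_approxDeriv_sub_profileDeriv_le hν0 s
    _ = (approx ν 1 - approx ν 0) - (profile 1 - profile 0) +
          2 * (profile 1 - profile (junction ν)) := by
        rw [intervalIntegral.integral_add (hA.sub hp) (hind.const_mul 2),
          intervalIntegral.integral_sub hA hp, intervalIntegral.integral_const_mul,
          hA_eq, integral_profileDeriv zero_le_one le_rfl, hind_eq,
          integral_profileDeriv hj1 le_rfl]
    _ ≤ 2 / ν := by
        have hp0 : profile 0 = 0 := by simp [profile]
        have hp1 : profile 1 = 1 := by simp [profile]
        linarith [approx_one hν0, show 2 / ν = 2 * (1 / ν) by ring]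

theorem integral_approx_error_le (hν : 1 ≤ ν) :
    ∫ s in (0:ℝ)..1, (|approx ν s - profile s| + |approxDeriv ν s - profileDeriv s|) ≤ 3 / ν := by
  have hν0 : 0 < ν := zero_lt_one.trans_le hν
  have hcont : Continuous fun s => |approx ν s - profile s| :=
    ((lipschitzWith_approx hν0).continuous.sub continuous_profile).abs
  have hderiv := ((intervalIntegrable_approxDeriv hν0 0 1).sub
    (intervalIntegrable_profileDeriv zero_le_one le_rfl)).abs
  have hvalue : ∫ s in (0:ℝ)..1, |approx ν s - profile s| ≤ 1 / ν := by
    have h := intervalIntegral.norm_integral_le_of_norm_le_const (a := 0) (b := 1) (C := 1 / ν)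
      (f := fun s => |approx ν s - profile s|) fun s hs => by
        rw [Real.norm_eq_abs, abs_abs]
        rw [uIoc_of_le zero_le_one] at hs
        exact abs_approx_sub_profile_le hν0 hs.2
    simpa using (le_abs_self _).trans h
  rw [intervalIntegral.integral_add (hcont.intervalIntegrable 0 1) hderiv]
  linarith [integral_abs_approxDeriv_sub_profileDeriv_le hν, show 3 / ν = 1 / ν + 2 / ν by ring]

end

theorem tendsto_integral_approx_error :
    Tendsto (fun ν => ∫ s in (0:ℝ)..1,
      (|approx ν s - profile s| + |approxDeriv ν s - profileDeriv s|)) atTop (𝓝 0) := by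
  refine tendsto_of_tendsto_of_tendsto_of_le_of_le' tendsto_const_nhds
    (tendsto_const_nhds.div_atTop tendsto_id : Tendsto (fun ν : ℝ => 3 / ν) atTop (𝓝 0))
    (Eventually.of_forall fun ν =>
      intervalIntegral.integral_nonneg zero_le_one fun s _ => by positivity) ?_
  filter_upwards [eventually_ge_atTop 1] with ν hν using integral_approx_error_le hν

end Alberti

/-- Constructive Lipschitz approximation in Alberti's example: with
`y(s) = 1 − √(1−s)`, `q(z) = 1/(2(1−z))`, `t_ν = 1 − 1/(4ν²)` (so `y'(t_ν) = ν`),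
`φ_ν(τ) = 1 + (y(τ)−1)/ν` on `[t_ν,1]` extended with slope `1` below, the function
`y_ν` (`= y(s + t_ν − φ_ν(t_ν))` for `s ≤ φ_ν(t_ν)`, `= 1 + ν(s−1)` above) is
Lipschitz, satisfies `y_ν(1) = 1`, `y_ν' ≤ q(y_ν)` a.e., `φ_ν(0) ≤ 0`, `φ_ν` is
strictly increasing, and `y_ν → y` in `W^{1,1}([0,1])`. -/
theorem stmt17 (y q : ℝ → ℝ) (tν c : ℝ → ℝ) (φ Y Yd : ℝ → ℝ → ℝ)
    (hy : ∀ s, y s = 1 - Real.sqrt (1 - s))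
    (hq : ∀ z, q z = 1 / (2 * (1 - z)))
    (htν : ∀ ν, tν ν = 1 - 1 / (4 * ν ^ 2))
    (hc : ∀ ν, c ν = 1 + (y (tν ν) - 1) / ν)
    (hφ : ∀ ν τ, φ ν τ =
      if τ ≤ tν ν then c ν + τ - tν ν else 1 + (y τ - 1) / ν)
    (hY : ∀ ν s, Y ν s =
      if s ≤ c ν then y (s + tν ν - c ν) else 1 + ν * (s - 1))
    (hYd : ∀ ν s, Yd ν s =
      if s ≤ c ν then 1 / (2 * Real.sqrt (1 - (s + tν ν - c ν))) else ν) :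
    (∀ ν : ℝ, 1 ≤ ν →
      φ ν 0 ≤ 0 ∧
      StrictMonoOn (φ ν) (Icc (0:ℝ) 1) ∧
      LipschitzOnWith (Real.toNNReal ν) (Y ν) (Icc (0:ℝ) 1) ∧
      Y ν 1 = 1 ∧
      (∀ᵐ s ∂(volume.restrict (Icc (0:ℝ) 1)), Yd ν s ≤ q (Y ν s))) ∧
    Tendsto (fun ν : ℝ =>
        ∫ s in (0:ℝ)..1,
          (|Y ν s - y s| + |Yd ν s - 1 / (2 * Real.sqrt (1 - s))|))
      atTop (nhds 0) := by
  obtain rfl : y = Alberti.profile := funext hy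
  obtain rfl : q = fun z => 1 / (2 * (1 - z)) := funext hq
  obtain rfl : tν = Alberti.threshold := funext htν
  obtain rfl : c = Alberti.junction := funext hc
  obtain rfl : φ = Alberti.reparam := funext₂ hφ
  obtain rfl : Y = Alberti.approx := funext₂ hY
  obtain rfl : Yd = Alberti.approxDeriv := funext₂ hYd
  refine ⟨fun ν hν => ?_, Alberti.tendsto_integral_approx_error⟩
  have hν0 : 0 < ν := zero_lt_one.trans_le hν
  exact ⟨Alberti.reparam_zero_nonpos hν,
    (Alberti.strictMonoOn_reparam hν0).mono Icc_subset_Iic_self,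
    (Alberti.lipschitzWith_approx hν0).lipschitzOnWith, Alberti.approx_one hν0,
    Alberti.ae_approxDeriv_le hν0⟩
end
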